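/- arXiv:1612.03342 — 9 statements merged into one kernel-verified Lean document; each statement's English description precedes it below -/
import Mathlib

section
/- Let U ⊆ ℝ² be open, let g^{11}, g^{12}, g^{22} be smooth functions on U, and set H(x,p) = (1/2)g^{11}(x)p₁² + g^{12}(x)p₁p₂ + (1/2)g^{22}(x)p₂². Let N ≥ 2, let 1 ≤ k ≤ l ≤ N−1, and let a_k, a_{k+1}, …, a_l be smooth functions on U such that a_k and a_l are nowhere zero on U. Set f(x,p) = ∑_{m=k}^{l} a_m(x) p₁^{N−m} p₂^{m}. If the canonical Poisson bracket {f,H} vanishes identically on U × ℝ², then ∂g^{11}/∂x² = 0 and ∂g^{22}/∂x¹ = 0 on U, i.e. g^{11} depends only on x¹ and g^{22} depends only on x². -/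
open Polynomial

/-- Partial derivative in the first variable of a function of two real variables. -/
noncomputable def pd1 (g : ℝ → ℝ → ℝ) (x1 x2 : ℝ) : ℝ := deriv (fun t => g t x2) x1

/-- Partial derivative in the second variable of a function of two real variables. -/
noncomputable def pd2 (g : ℝ → ℝ → ℝ) (x1 x2 : ℝ) : ℝ := deriv (fun t => g x1 t) x2

/-- The canonical Poisson bracket on `T*ℝ²` with coordinates `(x¹, x², p₁, p₂)`. -/
noncomputable def pbracket (f g : ℝ → ℝ → ℝ → ℝ → ℝ) (x1 x2 p1 p2 : ℝ) : ℝ :=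
    deriv (fun t => f t x2 p1 p2) x1 * deriv (fun t => g x1 x2 t p2) p1
  - deriv (fun t => f x1 x2 t p2) p1 * deriv (fun t => g t x2 p1 p2) x1
  + deriv (fun t => f x1 t p1 p2) x2 * deriv (fun t => g x1 x2 p1 t) p2
  - deriv (fun t => f x1 x2 p1 t) p2 * deriv (fun t => g x1 t p1 p2) x2

private lemma hasDerivAt_fst {U : Set (ℝ × ℝ)} (hU : IsOpen U) {b : ℝ → ℝ → ℝ}
    (hb : ContDiffOn ℝ (⊤ : ℕ∞) (fun z : ℝ × ℝ => b z.1 z.2) U) {x1 x2 : ℝ} (h : (x1, x2) ∈ U) :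
    HasDerivAt (fun t => b t x2) (pd1 b x1 x2) x1 := by
  have hd : DifferentiableAt ℝ (fun z : ℝ × ℝ => b z.1 z.2) (x1, x2) :=
    (hb.contDiffAt (hU.mem_nhds h)).differentiableAt (by simp)
  have h2 : DifferentiableAt ℝ (fun t : ℝ => ((t, x2) : ℝ × ℝ)) x1 :=
    differentiableAt_id.prodMk (differentiableAt_const _)
  have : DifferentiableAt ℝ (fun t => b t x2) x1 := hd.comp (g := fun z : ℝ × ℝ => b z.1 z.2) x1 h2
  exact this.hasDerivAt

private lemma hasDerivAt_snd {U : Set (ℝ × ℝ)} (hU : IsOpen U) {b : ℝ → ℝ → ℝ}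
    (hb : ContDiffOn ℝ (⊤ : ℕ∞) (fun z : ℝ × ℝ => b z.1 z.2) U) {x1 x2 : ℝ} (h : (x1, x2) ∈ U) :
    HasDerivAt (fun t => b x1 t) (pd2 b x1 x2) x2 := by
  have hd : DifferentiableAt ℝ (fun z : ℝ × ℝ => b z.1 z.2) (x1, x2) :=
    (hb.contDiffAt (hU.mem_nhds h)).differentiableAt (by simp)
  have h2 : DifferentiableAt ℝ (fun t : ℝ => ((x1, t) : ℝ × ℝ)) x2 :=
    DifferentiableAt.prodMk (differentiableAt_const _) differentiableAt_id
  have : DifferentiableAt ℝ (fun t => b x1 t) x2 := hd.comp (g := fun z : ℝ × ℝ => b z.1 z.2) x2 h2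
  exact this.hasDerivAt

private lemma lin_coeff (u v : ℝ) (j : ℕ) :
    (C u + C v * X : ℝ[X]).coeff j = if j = 0 then u else if j = 1 then v else 0 := by
  rcases j with _ | _ | j <;>
    simp [coeff_add, coeff_C, coeff_X, Polynomial.coeff_C_mul]

private lemma quad_coeff (u v w : ℝ) (j : ℕ) :
    (C u + C v * X + C w * X ^ 2 : ℝ[X]).coeff j =
      if j = 0 then u else if j = 1 then v else if j = 2 then w else 0 := by
  rcases j with _ | _ | _ | j <;>
    simp [coeff_add, coeff_C, coeff_X, coeff_X_pow, Polynomial.coeff_C_mul]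

private lemma cXp_coeff (c : ℝ) (q : ℝ[X]) (i n : ℕ) :
    (C c * q * X ^ i).coeff n = if i ≤ n then c * q.coeff (n - i) else 0 := by
  rw [Polynomial.coeff_mul_X_pow', Polynomial.coeff_C_mul]

private lemma lin_coeff_zero (u v : ℝ) {j : ℕ} (h : 2 ≤ j) :
    (C u + C v * X : ℝ[X]).coeff j = 0 := by
  rw [lin_coeff, if_neg (by omega), if_neg (by omega)]

private lemma quad_coeff_zero (u v w : ℝ) {j : ℕ} (h : 3 ≤ j) :
    (C u + C v * X + C w * X ^ 2 : ℝ[X]).coeff j = 0 := by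
  rw [quad_coeff, if_neg (by omega), if_neg (by omega), if_neg (by omega)]

/-- If a homogeneous polynomial in momenta divisible by `p₁p₂` (with nowhere-vanishing
extreme coefficients) is a first integral of the geodesic Hamiltonian
`H = (1/2)g¹¹p₁² + g¹²p₁p₂ + (1/2)g²²p₂²`, then `g¹¹` depends only on `x¹` and
`g²²` depends only on `x²`. -/
theorem metric_diagonal_coefficients_separate
    (U : Set (ℝ × ℝ)) (hU : IsOpen U)
    (g11 g12 g22 : ℝ → ℝ → ℝ)
    (hg11 : ContDiffOn ℝ (⊤ : ℕ∞) (fun z : ℝ × ℝ => g11 z.1 z.2) U)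
    (hg12 : ContDiffOn ℝ (⊤ : ℕ∞) (fun z : ℝ × ℝ => g12 z.1 z.2) U)
    (hg22 : ContDiffOn ℝ (⊤ : ℕ∞) (fun z : ℝ × ℝ => g22 z.1 z.2) U)
    (N k l : ℕ) (hN : 2 ≤ N) (hk : 1 ≤ k) (hkl : k ≤ l) (hl : l ≤ N - 1)
    (a : ℕ → ℝ → ℝ → ℝ)
    (ha : ∀ m ∈ Finset.Icc k l, ContDiffOn ℝ (⊤ : ℕ∞) (fun z : ℝ × ℝ => a m z.1 z.2) U)
    (hak : ∀ x1 x2 : ℝ, (x1, x2) ∈ U → a k x1 x2 ≠ 0)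
    (hal : ∀ x1 x2 : ℝ, (x1, x2) ∈ U → a l x1 x2 ≠ 0)
    (H f : ℝ → ℝ → ℝ → ℝ → ℝ)
    (hH : ∀ x1 x2 p1 p2 : ℝ, H x1 x2 p1 p2 =
      (1 / 2) * g11 x1 x2 * p1 ^ 2 + g12 x1 x2 * p1 * p2 + (1 / 2) * g22 x1 x2 * p2 ^ 2)
    (hf : ∀ x1 x2 p1 p2 : ℝ, f x1 x2 p1 p2 =
      ∑ m ∈ Finset.Icc k l, a m x1 x2 * p1 ^ (N - m) * p2 ^ m)
    (hint : ∀ x1 x2 p1 p2 : ℝ, (x1, x2) ∈ U → pbracket f H x1 x2 p1 p2 = 0) :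
    ∀ x1 x2 : ℝ, (x1, x2) ∈ U → pd2 g11 x1 x2 = 0 ∧ pd1 g22 x1 x2 = 0 := by
  intro x1 x2 hx
  classical
  -- Step 1: the bracket at p1 = 1, organized as a single sum over m
  have key : ∀ p2 : ℝ,
      (∑ m ∈ Finset.Icc k l,
        (pd1 (a m) x1 x2 * (g11 x1 x2 + g12 x1 x2 * p2) * p2 ^ m
          - a m x1 x2 * ((N - m : ℕ) : ℝ) *
              (1 / 2 * pd1 g11 x1 x2 + pd1 g12 x1 x2 * p2 + 1 / 2 * pd1 g22 x1 x2 * p2 ^ 2) * p2 ^ m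
          + pd2 (a m) x1 x2 * (g12 x1 x2 + g22 x1 x2 * p2) * p2 ^ m
          - a m x1 x2 * (m : ℝ) *
              (1 / 2 * pd2 g11 x1 x2 + pd2 g12 x1 x2 * p2 + 1 / 2 * pd2 g22 x1 x2 * p2 ^ 2) * p2 ^ (m - 1))) = 0 := by
    intro p2
    have hb := hint x1 x2 1 p2 hx
    unfold pbracket at hb
    have F1 : (fun t => f t x2 1 p2)
        = fun t => ∑ m ∈ Finset.Icc k l, a m t x2 * (1 : ℝ) ^ (N - m) * p2 ^ m :=
      funext fun t => hf t x2 1 p2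
    have F2 : (fun t => H x1 x2 t p2)
        = fun t => 1 / 2 * g11 x1 x2 * t ^ 2 + g12 x1 x2 * t * p2 + 1 / 2 * g22 x1 x2 * p2 ^ 2 :=
      funext fun t => hH x1 x2 t p2
    have F3 : (fun t => f x1 x2 t p2)
        = fun t => ∑ m ∈ Finset.Icc k l, a m x1 x2 * t ^ (N - m) * p2 ^ m :=
      funext fun t => hf x1 x2 t p2
    have F4 : (fun t => H t x2 1 p2)
        = fun t => 1 / 2 * g11 t x2 * (1 : ℝ) ^ 2 + g12 t x2 * 1 * p2 + 1 / 2 * g22 t x2 * p2 ^ 2 :=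
      funext fun t => hH t x2 1 p2
    have F5 : (fun t => f x1 t 1 p2)
        = fun t => ∑ m ∈ Finset.Icc k l, a m x1 t * (1 : ℝ) ^ (N - m) * p2 ^ m :=
      funext fun t => hf x1 t 1 p2
    have F6 : (fun t => H x1 x2 1 t)
        = fun t => 1 / 2 * g11 x1 x2 * (1 : ℝ) ^ 2 + g12 x1 x2 * 1 * t + 1 / 2 * g22 x1 x2 * t ^ 2 :=
      funext fun t => hH x1 x2 1 t
    have F7 : (fun t => f x1 x2 1 t)
        = fun t => ∑ m ∈ Finset.Icc k l, a m x1 x2 * (1 : ℝ) ^ (N - m) * t ^ m :=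
      funext fun t => hf x1 x2 1 t
    have F8 : (fun t => H x1 t 1 p2)
        = fun t => 1 / 2 * g11 x1 t * (1 : ℝ) ^ 2 + g12 x1 t * 1 * p2 + 1 / 2 * g22 x1 t * p2 ^ 2 :=
      funext fun t => hH x1 t 1 p2
    rw [F1, F2, F3, F4, F5, F6, F7, F8] at hb
    have D1 : HasDerivAt
        (fun t => ∑ m ∈ Finset.Icc k l, a m t x2 * (1 : ℝ) ^ (N - m) * p2 ^ m)
        (∑ m ∈ Finset.Icc k l, pd1 (a m) x1 x2 * (1 : ℝ) ^ (N - m) * p2 ^ m) x1 :=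
      HasDerivAt.fun_sum fun m hm => ((hasDerivAt_fst hU (ha m hm) hx).mul_const _).mul_const _
    have D2 : HasDerivAt
        (fun t => 1 / 2 * g11 x1 x2 * t ^ 2 + g12 x1 x2 * t * p2 + 1 / 2 * g22 x1 x2 * p2 ^ 2)
        (g11 x1 x2 + g12 x1 x2 * p2) 1 := by
      have raw := (((hasDerivAt_pow 2 (1 : ℝ)).const_mul (1 / 2 * g11 x1 x2)).add
        (((hasDerivAt_id (1 : ℝ)).const_mul (g12 x1 x2)).mul_const p2)).add
        (hasDerivAt_const (1 : ℝ) (1 / 2 * g22 x1 x2 * p2 ^ 2))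
      have hval : 1 / 2 * g11 x1 x2 * (((2 : ℕ) : ℝ) * (1 : ℝ) ^ (2 - 1)) + g12 x1 x2 * 1 * p2 + 0
          = g11 x1 x2 + g12 x1 x2 * p2 := by norm_num; ring
      exact hval ▸ raw
    have D3 : HasDerivAt
        (fun t => ∑ m ∈ Finset.Icc k l, a m x1 x2 * t ^ (N - m) * p2 ^ m)
        (∑ m ∈ Finset.Icc k l,
          a m x1 x2 * (((N - m : ℕ) : ℝ) * (1 : ℝ) ^ (N - m - 1)) * p2 ^ m) 1 :=
      HasDerivAt.fun_sum fun m hm =>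
        ((hasDerivAt_pow (N - m) (1 : ℝ)).const_mul (a m x1 x2)).mul_const _
    have D4 : HasDerivAt
        (fun t => 1 / 2 * g11 t x2 * (1 : ℝ) ^ 2 + g12 t x2 * 1 * p2 + 1 / 2 * g22 t x2 * p2 ^ 2)
        (1 / 2 * pd1 g11 x1 x2 * (1 : ℝ) ^ 2 + pd1 g12 x1 x2 * 1 * p2
          + 1 / 2 * pd1 g22 x1 x2 * p2 ^ 2) x1 :=
      ((((hasDerivAt_fst hU hg11 hx).const_mul (1 / 2)).mul_const ((1 : ℝ) ^ 2)).add
        (((hasDerivAt_fst hU hg12 hx).mul_const 1).mul_const p2)).add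
        (((hasDerivAt_fst hU hg22 hx).const_mul (1 / 2)).mul_const (p2 ^ 2))
    have D5 : HasDerivAt
        (fun t => ∑ m ∈ Finset.Icc k l, a m x1 t * (1 : ℝ) ^ (N - m) * p2 ^ m)
        (∑ m ∈ Finset.Icc k l, pd2 (a m) x1 x2 * (1 : ℝ) ^ (N - m) * p2 ^ m) x2 :=
      HasDerivAt.fun_sum fun m hm => ((hasDerivAt_snd hU (ha m hm) hx).mul_const _).mul_const _
    have D6 : HasDerivAt
        (fun t => 1 / 2 * g11 x1 x2 * (1 : ℝ) ^ 2 + g12 x1 x2 * 1 * t + 1 / 2 * g22 x1 x2 * t ^ 2)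
        (g12 x1 x2 + g22 x1 x2 * p2) p2 := by
      have raw := ((hasDerivAt_const p2 (1 / 2 * g11 x1 x2 * (1 : ℝ) ^ 2)).add
        ((hasDerivAt_id p2).const_mul (g12 x1 x2 * 1))).add
        ((hasDerivAt_pow 2 p2).const_mul (1 / 2 * g22 x1 x2))
      have hval : 0 + g12 x1 x2 * 1 * 1 + 1 / 2 * g22 x1 x2 * (((2 : ℕ) : ℝ) * p2 ^ (2 - 1))
          = g12 x1 x2 + g22 x1 x2 * p2 := by norm_num; ring
      exact hval ▸ raw
    have D7 : HasDerivAt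
        (fun t => ∑ m ∈ Finset.Icc k l, a m x1 x2 * (1 : ℝ) ^ (N - m) * t ^ m)
        (∑ m ∈ Finset.Icc k l,
          a m x1 x2 * (1 : ℝ) ^ (N - m) * ((m : ℝ) * p2 ^ (m - 1))) p2 :=
      HasDerivAt.fun_sum fun m hm =>
        (hasDerivAt_pow m p2).const_mul (a m x1 x2 * (1 : ℝ) ^ (N - m))
    have D8 : HasDerivAt
        (fun t => 1 / 2 * g11 x1 t * (1 : ℝ) ^ 2 + g12 x1 t * 1 * p2 + 1 / 2 * g22 x1 t * p2 ^ 2)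
        (1 / 2 * pd2 g11 x1 x2 * (1 : ℝ) ^ 2 + pd2 g12 x1 x2 * 1 * p2
          + 1 / 2 * pd2 g22 x1 x2 * p2 ^ 2) x2 :=
      ((((hasDerivAt_snd hU hg11 hx).const_mul (1 / 2)).mul_const ((1 : ℝ) ^ 2)).add
        (((hasDerivAt_snd hU hg12 hx).mul_const 1).mul_const p2)).add
        (((hasDerivAt_snd hU hg22 hx).const_mul (1 / 2)).mul_const (p2 ^ 2))
    rw [D1.deriv, D2.deriv, D3.deriv, D4.deriv, D5.deriv, D6.deriv, D7.deriv, D8.deriv] at hb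
    rw [← hb]
    rw [Finset.sum_mul, Finset.sum_mul, Finset.sum_mul, Finset.sum_mul,
      ← Finset.sum_sub_distrib, ← Finset.sum_add_distrib, ← Finset.sum_sub_distrib]
    refine Finset.sum_congr rfl fun m hm => ?_
    ring
  -- Step 2: the corresponding polynomial identity
  have hP : (∑ m ∈ Finset.Icc k l,
      (C (pd1 (a m) x1 x2) * (C (g11 x1 x2) + C (g12 x1 x2) * X) * X ^ m
        - C (a m x1 x2 * ((N - m : ℕ) : ℝ)) *
            (C (1 / 2 * pd1 g11 x1 x2) + C (pd1 g12 x1 x2) * X + C (1 / 2 * pd1 g22 x1 x2) * X ^ 2) * X ^ m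
        + C (pd2 (a m) x1 x2) * (C (g12 x1 x2) + C (g22 x1 x2) * X) * X ^ m
        - C (a m x1 x2 * (m : ℝ)) *
            (C (1 / 2 * pd2 g11 x1 x2) + C (pd2 g12 x1 x2) * X + C (1 / 2 * pd2 g22 x1 x2) * X ^ 2) * X ^ (m - 1)) : ℝ[X]) = 0 := by
    apply Polynomial.funext
    intro r
    rw [Polynomial.eval_zero, Polynomial.eval_finset_sum, ← key r]
    refine Finset.sum_congr rfl fun m hm => ?_
    simp [Polynomial.eval_mul, Polynomial.eval_add, Polynomial.eval_sub, Polynomial.eval_pow]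
  -- Step 3a: coefficient at k-1
  have hck : -(a k x1 x2 * ((k : ℕ) : ℝ) * (1 / 2 * pd2 g11 x1 x2)) = 0 := by
    have h0 := congrArg (fun q : ℝ[X] => q.coeff (k - 1)) hP
    simp only [Polynomial.finset_sum_coeff, Polynomial.coeff_zero] at h0
    rw [Finset.sum_eq_single_of_mem k (Finset.mem_Icc.mpr ⟨le_rfl, hkl⟩)] at h0
    · rw [← h0]
      have hc1 : ¬ k ≤ k - 1 := by omega
      simp only [Polynomial.coeff_sub, Polynomial.coeff_add, cXp_coeff, if_neg hc1,
        if_pos (le_refl (k - 1)), Nat.sub_self, quad_coeff]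
      norm_num
    · intro m hm hne
      have hm' := Finset.mem_Icc.mp hm
      have hc1 : ¬ m ≤ k - 1 := by omega
      have hc2 : ¬ m - 1 ≤ k - 1 := by omega
      simp only [Polynomial.coeff_sub, Polynomial.coeff_add, cXp_coeff, if_neg hc1, if_neg hc2]
      ring
  -- Step 3b: coefficient at l+2
  have hcl : -(a l x1 x2 * ((N - l : ℕ) : ℝ) * (1 / 2 * pd1 g22 x1 x2)) = 0 := by
    have h0 := congrArg (fun q : ℝ[X] => q.coeff (l + 2)) hP
    simp only [Polynomial.finset_sum_coeff, Polynomial.coeff_zero] at h0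
    rw [Finset.sum_eq_single_of_mem l (Finset.mem_Icc.mpr ⟨hkl, le_rfl⟩)] at h0
    · rw [← h0]
      have hc1 : l ≤ l + 2 := by omega
      have hc2 : l - 1 ≤ l + 2 := by omega
      simp only [Polynomial.coeff_sub, Polynomial.coeff_add, cXp_coeff, if_pos hc1, if_pos hc2,
        show l + 2 - l = 2 from by omega, show l + 2 - (l - 1) = 3 from by omega,
        quad_coeff, lin_coeff]
      norm_num [cXp_coeff, Polynomial.coeff_C]
    · intro m hm hne
      have hm' := Finset.mem_Icc.mp hm
      have hc1 : m ≤ l + 2 := by omega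
      have hc2 : m - 1 ≤ l + 2 := by omega
      simp only [Polynomial.coeff_sub, Polynomial.coeff_add, cXp_coeff, if_pos hc1, if_pos hc2,
        lin_coeff_zero _ _ (by omega : 2 ≤ l + 2 - m),
        quad_coeff_zero _ _ _ (by omega : 3 ≤ l + 2 - m),
        quad_coeff_zero _ _ _ (by omega : 3 ≤ l + 2 - (m - 1))]
      ring
  -- Step 4: conclude
  constructor
  · have hne : a k x1 x2 * ((k : ℕ) : ℝ) ≠ 0 :=
      mul_ne_zero (hak x1 x2 hx) (Nat.cast_ne_zero.mpr (by omega))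
    have h := neg_eq_zero.mp hck
    rcases mul_eq_zero.mp h with h' | h'
    · exact absurd h' hne
    · linarith
  · have hne : a l x1 x2 * ((N - l : ℕ) : ℝ) ≠ 0 :=
      mul_ne_zero (hal x1 x2 hx) (Nat.cast_ne_zero.mpr (by omega))
    have h := neg_eq_zero.mp hcl
    rcases mul_eq_zero.mp h with h' | h'
    · exact absurd h' hne
    · linarith
end

section
/- Let N ≥ 3, let U ⊆ ℝ² be open, and let g, a₁, …, a_{N−1} be smooth real functions on U. Define H(x,p) = (1/2)p₁² + g(x)p₁p₂ + (1/2)p₂² and f(x,p) = ∑_{m=1}^{N−1} a_m(x) p₁^{N−m} p₂^{m}. Then the canonical Poisson bracket {f,H} vanishes identically on U × ℝ² if and only if the following quasi-linear first-order system holds on U: (i) a_{1,x¹} + g·a_{1,x²} = a₁·g_{x²}; (ii) for every k = 2, …, N−1: a_{k,x¹} + g·a_{k−1,x¹} + g·a_{k,x²} + a_{k−1,x²} = k·a_k·g_{x²} + (N+1−k)·a_{k−1}·g_{x¹}; (iii) g·a_{N−1,x¹} + a_{N−1,x²} = a_{N−1}·g_{x¹}. -/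
noncomputable def Ac (g : ℝ → ℝ → ℝ) (a : ℕ → ℝ → ℝ → ℝ) (x1 x2 : ℝ) (m : ℕ) : ℝ :=
  pd1 (a m) x1 x2 + g x1 x2 * pd2 (a m) x1 x2 - (m : ℝ) * a m x1 x2 * pd2 g x1 x2

noncomputable def Bc (N : ℕ) (g : ℝ → ℝ → ℝ) (a : ℕ → ℝ → ℝ → ℝ) (x1 x2 : ℝ) (m : ℕ) : ℝ :=
  g x1 x2 * pd1 (a m) x1 x2 + pd2 (a m) x1 x2 - ((N - m : ℕ) : ℝ) * a m x1 x2 * pd1 g x1 x2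

noncomputable def Cc (N : ℕ) (g : ℝ → ℝ → ℝ) (a : ℕ → ℝ → ℝ → ℝ) (x1 x2 : ℝ) (k : ℕ) : ℝ :=
  (if k ∈ Finset.Icc 1 (N - 1) then Ac g a x1 x2 k else 0)
  + (if k ∈ Finset.Icc 2 N then Bc N g a x1 x2 (k - 1) else 0)


lemma aux_hasDerivAt_pd1 {U : Set (ℝ × ℝ)} (hU : IsOpen U) {g : ℝ → ℝ → ℝ}
    (hg : ContDiffOn ℝ (⊤ : ℕ∞) (fun z : ℝ × ℝ => g z.1 z.2) U) {x1 x2 : ℝ}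
    (hx : (x1, x2) ∈ U) : HasDerivAt (fun t => g t x2) (pd1 g x1 x2) x1 := by
  have hd : DifferentiableAt ℝ (fun z : ℝ × ℝ => g z.1 z.2) (x1, x2) :=
    (hg.contDiffAt (hU.mem_nhds hx)).differentiableAt (by simp)
  have h2 : DifferentiableAt ℝ (fun t : ℝ => (t, x2)) x1 :=
    differentiableAt_id.prodMk (differentiableAt_const _)
  exact (hd.comp x1 h2).hasDerivAt

lemma aux_hasDerivAt_pd2 {U : Set (ℝ × ℝ)} (hU : IsOpen U) {g : ℝ → ℝ → ℝ}
    (hg : ContDiffOn ℝ (⊤ : ℕ∞) (fun z : ℝ × ℝ => g z.1 z.2) U) {x1 x2 : ℝ}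
    (hx : (x1, x2) ∈ U) : HasDerivAt (fun t => g x1 t) (pd2 g x1 x2) x2 := by
  have hd : DifferentiableAt ℝ (fun z : ℝ × ℝ => g z.1 z.2) (x1, x2) :=
    (hg.contDiffAt (hU.mem_nhds hx)).differentiableAt (by simp)
  have h2 : DifferentiableAt ℝ (fun t : ℝ => (x1, t)) x2 :=
    (differentiableAt_const _).prodMk differentiableAt_id
  exact (hd.comp x2 h2).hasDerivAt

section key

variable (N : ℕ) (hN : 3 ≤ N)
    (U : Set (ℝ × ℝ)) (hU : IsOpen U)
    (g : ℝ → ℝ → ℝ) (a : ℕ → ℝ → ℝ → ℝ)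
    (hg : ContDiffOn ℝ (⊤ : ℕ∞) (fun z : ℝ × ℝ => g z.1 z.2) U)
    (ha : ∀ m ∈ Finset.Icc 1 (N - 1), ContDiffOn ℝ (⊤ : ℕ∞) (fun z : ℝ × ℝ => a m z.1 z.2) U)
    (H f : ℝ → ℝ → ℝ → ℝ → ℝ)
    (hH : ∀ x1 x2 p1 p2 : ℝ, H x1 x2 p1 p2 =
      (1 / 2) * p1 ^ 2 + g x1 x2 * p1 * p2 + (1 / 2) * p2 ^ 2)
    (hf : ∀ x1 x2 p1 p2 : ℝ, f x1 x2 p1 p2 =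
      ∑ m ∈ Finset.Icc 1 (N - 1), a m x1 x2 * p1 ^ (N - m) * p2 ^ m)


include hN hU hg ha hH hf in
lemma key_expansion {x1 x2 : ℝ} (hx : (x1, x2) ∈ U) (p1 p2 : ℝ) :
    pbracket f H x1 x2 p1 p2
      = ∑ k ∈ Finset.Icc 1 N, Cc N g a x1 x2 k * p1 ^ (N + 1 - k) * p2 ^ k := by
  have hg1 := aux_hasDerivAt_pd1 hU hg hx
  have hg2 := aux_hasDerivAt_pd2 hU hg hx
  have ha1 : ∀ m ∈ Finset.Icc 1 (N-1), HasDerivAt (fun t => a m t x2) (pd1 (a m) x1 x2) x1 :=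
    fun m hm => aux_hasDerivAt_pd1 hU (ha m hm) hx
  have ha2 : ∀ m ∈ Finset.Icc 1 (N-1), HasDerivAt (fun t => a m x1 t) (pd2 (a m) x1 x2) x2 :=
    fun m hm => aux_hasDerivAt_pd2 hU (ha m hm) hx
  -- the eight derivatives
  have e1 : deriv (fun t => f t x2 p1 p2) x1
      = ∑ m ∈ Finset.Icc 1 (N-1), pd1 (a m) x1 x2 * p1 ^ (N - m) * p2 ^ m := by
    have h : (fun t => f t x2 p1 p2)
        = fun t => ∑ m ∈ Finset.Icc 1 (N-1), a m t x2 * p1 ^ (N - m) * p2 ^ m :=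
      funext fun t => hf t x2 p1 p2
    rw [h]
    exact (HasDerivAt.fun_sum fun m hm => ((ha1 m hm).mul_const _).mul_const _).deriv
  have e5 : deriv (fun t => f x1 t p1 p2) x2
      = ∑ m ∈ Finset.Icc 1 (N-1), pd2 (a m) x1 x2 * p1 ^ (N - m) * p2 ^ m := by
    have h : (fun t => f x1 t p1 p2)
        = fun t => ∑ m ∈ Finset.Icc 1 (N-1), a m x1 t * p1 ^ (N - m) * p2 ^ m :=
      funext fun t => hf x1 t p1 p2
    rw [h]
    exact (HasDerivAt.fun_sum fun m hm => ((ha2 m hm).mul_const _).mul_const _).deriv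
  have e3 : deriv (fun t => f x1 x2 t p2) p1
      = ∑ m ∈ Finset.Icc 1 (N-1), a m x1 x2 * (((N - m : ℕ) : ℝ) * p1 ^ (N - m - 1)) * p2 ^ m := by
    have h : (fun t => f x1 x2 t p2)
        = fun t => ∑ m ∈ Finset.Icc 1 (N-1), a m x1 x2 * t ^ (N - m) * p2 ^ m :=
      funext fun t => hf x1 x2 t p2
    rw [h]
    exact (HasDerivAt.fun_sum fun m _ =>
      (((hasDerivAt_pow (N - m) p1).const_mul (a m x1 x2)).mul_const (p2 ^ m))).deriv
  have e7 : deriv (fun t => f x1 x2 p1 t) p2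
      = ∑ m ∈ Finset.Icc 1 (N-1), a m x1 x2 * p1 ^ (N - m) * ((m : ℝ) * p2 ^ (m - 1)) := by
    have h : (fun t => f x1 x2 p1 t)
        = fun t => ∑ m ∈ Finset.Icc 1 (N-1), a m x1 x2 * p1 ^ (N - m) * t ^ m :=
      funext fun t => hf x1 x2 p1 t
    rw [h]
    exact (HasDerivAt.fun_sum fun m _ =>
      ((hasDerivAt_pow m p2).const_mul (a m x1 x2 * p1 ^ (N - m)))).deriv
  have e2 : deriv (fun t => H x1 x2 t p2) p1 = p1 + g x1 x2 * p2 := by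
    have h : (fun t => H x1 x2 t p2)
        = fun t => (1/2) * t ^ 2 + g x1 x2 * t * p2 + (1/2) * p2 ^ 2 :=
      funext fun t => hH x1 x2 t p2
    rw [h]
    have hd : HasDerivAt (fun t : ℝ => (1/2) * t ^ 2 + g x1 x2 * t * p2 + (1/2) * p2 ^ 2)
        ((1/2) * (((2:ℕ):ℝ) * p1 ^ (2-1)) + g x1 x2 * 1 * p2 + 0) p1 := by
      exact (((hasDerivAt_pow 2 p1).const_mul (1/2:ℝ)).add
        (((hasDerivAt_id p1).const_mul (g x1 x2)).mul_const p2)).add (hasDerivAt_const _ _)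
    rw [hd.deriv]; push_cast; ring
  have e6 : deriv (fun t => H x1 x2 p1 t) p2 = g x1 x2 * p1 + p2 := by
    have h : (fun t => H x1 x2 p1 t)
        = fun t => (1/2) * p1 ^ 2 + g x1 x2 * p1 * t + (1/2) * t ^ 2 :=
      funext fun t => hH x1 x2 p1 t
    rw [h]
    have hd : HasDerivAt (fun t : ℝ => (1/2) * p1 ^ 2 + g x1 x2 * p1 * t + (1/2) * t ^ 2)
        (0 + (g x1 x2 * p1) * 1 + (1/2) * (((2:ℕ):ℝ) * p2 ^ (2-1))) p2 := by
      exact ((hasDerivAt_const _ _).add ((hasDerivAt_id p2).const_mul (g x1 x2 * p1))).add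
        ((hasDerivAt_pow 2 p2).const_mul (1/2:ℝ))
    rw [hd.deriv]; push_cast; ring
  have e4 : deriv (fun t => H t x2 p1 p2) x1 = pd1 g x1 x2 * p1 * p2 := by
    have h : (fun t => H t x2 p1 p2)
        = fun t => (1/2) * p1 ^ 2 + g t x2 * p1 * p2 + (1/2) * p2 ^ 2 :=
      funext fun t => hH t x2 p1 p2
    rw [h]
    have hd : HasDerivAt (fun t : ℝ => (1/2) * p1 ^ 2 + g t x2 * p1 * p2 + (1/2) * p2 ^ 2)
        (0 + pd1 g x1 x2 * p1 * p2 + 0) x1 := by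
      exact ((hasDerivAt_const _ _).add ((hg1.mul_const p1).mul_const p2)).add
        (hasDerivAt_const _ _)
    rw [hd.deriv]; ring
  have e8 : deriv (fun t => H x1 t p1 p2) x2 = pd2 g x1 x2 * p1 * p2 := by
    have h : (fun t => H x1 t p1 p2)
        = fun t => (1/2) * p1 ^ 2 + g x1 t * p1 * p2 + (1/2) * p2 ^ 2 :=
      funext fun t => hH x1 t p1 p2
    rw [h]
    have hd : HasDerivAt (fun t : ℝ => (1/2) * p1 ^ 2 + g x1 t * p1 * p2 + (1/2) * p2 ^ 2)
        (0 + pd2 g x1 x2 * p1 * p2 + 0) x2 := by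
      exact ((hasDerivAt_const _ _).add ((hg2.mul_const p1).mul_const p2)).add
        (hasDerivAt_const _ _)
    rw [hd.deriv]; ring
  rw [pbracket, e1, e2, e3, e4, e5, e6, e7, e8]
  -- turn everything into a single sum over Icc 1 (N-1)
  rw [Finset.sum_mul, Finset.sum_mul, Finset.sum_mul, Finset.sum_mul]
  rw [← Finset.sum_sub_distrib, ← Finset.sum_add_distrib, ← Finset.sum_sub_distrib]
  have step1 : ∑ m ∈ Finset.Icc 1 (N-1),
      (pd1 (a m) x1 x2 * p1 ^ (N - m) * p2 ^ m * (p1 + g x1 x2 * p2)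
        - a m x1 x2 * (((N - m : ℕ) : ℝ) * p1 ^ (N - m - 1)) * p2 ^ m * (pd1 g x1 x2 * p1 * p2)
        + pd2 (a m) x1 x2 * p1 ^ (N - m) * p2 ^ m * (g x1 x2 * p1 + p2)
        - a m x1 x2 * p1 ^ (N - m) * ((m : ℝ) * p2 ^ (m - 1)) * (pd2 g x1 x2 * p1 * p2))
      = ∑ m ∈ Finset.Icc 1 (N-1),
        (Ac g a x1 x2 m * p1 ^ (N + 1 - m) * p2 ^ m
          + Bc N g a x1 x2 m * p1 ^ (N - m) * p2 ^ (m + 1)) := by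
    apply Finset.sum_congr rfl
    intro m hm
    obtain ⟨hm1, hm2⟩ := Finset.mem_Icc.mp hm
    obtain ⟨n, hn⟩ : ∃ n, N - m = n + 1 := ⟨N - m - 1, by omega⟩
    obtain ⟨r, hr⟩ : ∃ r, m = r + 1 := ⟨m - 1, by omega⟩
    have q1 : N + 1 - m = n + 2 := by omega
    have q2 : N - m - 1 = n := by omega
    simp only [Ac, Bc]
    rw [q1, q2, hn, hr]
    push_cast
    ring
  rw [step1, Finset.sum_add_distrib]
  -- reindex the second sum
  have step2 : ∑ m ∈ Finset.Icc 1 (N-1), Bc N g a x1 x2 m * p1 ^ (N - m) * p2 ^ (m + 1)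
      = ∑ k ∈ Finset.Icc 2 N, Bc N g a x1 x2 (k - 1) * p1 ^ (N + 1 - k) * p2 ^ k := by
    apply Finset.sum_nbij' (fun m => m + 1) (fun k => k - 1)
    · intro m hm; rw [Finset.mem_Icc] at *; omega
    · intro k hk; rw [Finset.mem_Icc] at *; omega
    · intro m _; omega
    · intro k hk; rw [Finset.mem_Icc] at hk; omega
    · intro m hm
      rw [Finset.mem_Icc] at hm
      have q1 : m + 1 - 1 = m := by omega
      have q2 : N + 1 - (m + 1) = N - m := by omega
      rw [q1, q2]
  rw [step2]
  have hsub1 : Finset.Icc 1 (N-1) ⊆ Finset.Icc 1 N := by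
    apply Finset.Icc_subset_Icc le_rfl; omega
  have hsub2 : Finset.Icc 2 N ⊆ Finset.Icc 1 N := by
    apply Finset.Icc_subset_Icc (by omega) le_rfl
  have step3 : ∑ m ∈ Finset.Icc 1 (N-1), Ac g a x1 x2 m * p1 ^ (N + 1 - m) * p2 ^ m
      = ∑ k ∈ Finset.Icc 1 N,
          (if k ∈ Finset.Icc 1 (N-1) then Ac g a x1 x2 k else 0) * p1 ^ (N + 1 - k) * p2 ^ k := by
    rw [eq_comm]
    simp only [ite_mul, zero_mul]
    rw [Finset.sum_ite_mem, Finset.inter_eq_right.mpr hsub1]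
  have step4 : ∑ k ∈ Finset.Icc 2 N, Bc N g a x1 x2 (k-1) * p1 ^ (N + 1 - k) * p2 ^ k
      = ∑ k ∈ Finset.Icc 1 N,
          (if k ∈ Finset.Icc 2 N then Bc N g a x1 x2 (k-1) else 0) * p1 ^ (N + 1 - k) * p2 ^ k := by
    rw [eq_comm]
    simp only [ite_mul, zero_mul]
    rw [Finset.sum_ite_mem, Finset.inter_eq_right.mpr hsub2]
  rw [step3, step4, ← Finset.sum_add_distrib]
  apply Finset.sum_congr rfl
  intro k _
  rw [Cc]
  ring

end key

lemma aux_coeffs_zero (s : Finset ℕ) (c : ℕ → ℝ)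
    (h : ∀ x : ℝ, ∑ k ∈ s, c k * x ^ k = 0) : ∀ k ∈ s, c k = 0 := by
  intro k hk
  have hP : (∑ j ∈ s, Polynomial.C (c j) * Polynomial.X ^ j : Polynomial ℝ) = 0 := by
    apply Polynomial.funext
    intro x
    simpa [Polynomial.eval_finset_sum] using h x
  have hc := congrArg (fun P : Polynomial ℝ => P.coeff k) hP
  simpa [Polynomial.finset_sum_coeff, Polynomial.coeff_C_mul, Polynomial.coeff_X_pow,
    Finset.sum_ite_eq' s k, hk] using hc

/-- The polynomial `f = ∑_{m=1}^{N−1} a_m p₁^{N−m} p₂^m` is a first integral of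
`H = (1/2)p₁² + g p₁p₂ + (1/2)p₂²` if and only if the coefficients satisfy the
quasi-linear first-order (hydrodynamic-type) system (raz). -/
theorem polynomial_integral_iff_hydrodynamic_system
    (N : ℕ) (hN : 3 ≤ N)
    (U : Set (ℝ × ℝ)) (hU : IsOpen U)
    (g : ℝ → ℝ → ℝ) (a : ℕ → ℝ → ℝ → ℝ)
    (hg : ContDiffOn ℝ (⊤ : ℕ∞) (fun z : ℝ × ℝ => g z.1 z.2) U)
    (ha : ∀ m ∈ Finset.Icc 1 (N - 1), ContDiffOn ℝ (⊤ : ℕ∞) (fun z : ℝ × ℝ => a m z.1 z.2) U)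
    (H f : ℝ → ℝ → ℝ → ℝ → ℝ)
    (hH : ∀ x1 x2 p1 p2 : ℝ, H x1 x2 p1 p2 =
      (1 / 2) * p1 ^ 2 + g x1 x2 * p1 * p2 + (1 / 2) * p2 ^ 2)
    (hf : ∀ x1 x2 p1 p2 : ℝ, f x1 x2 p1 p2 =
      ∑ m ∈ Finset.Icc 1 (N - 1), a m x1 x2 * p1 ^ (N - m) * p2 ^ m) :
    (∀ x1 x2 p1 p2 : ℝ, (x1, x2) ∈ U → pbracket f H x1 x2 p1 p2 = 0) ↔
    (∀ x1 x2 : ℝ, (x1, x2) ∈ U →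
      (pd1 (a 1) x1 x2 + g x1 x2 * pd2 (a 1) x1 x2 = a 1 x1 x2 * pd2 g x1 x2) ∧
      (∀ k : ℕ, 2 ≤ k → k ≤ N - 1 →
        pd1 (a k) x1 x2 + g x1 x2 * pd1 (a (k - 1)) x1 x2
          + g x1 x2 * pd2 (a k) x1 x2 + pd2 (a (k - 1)) x1 x2
        = (k : ℝ) * a k x1 x2 * pd2 g x1 x2
          + ((N : ℝ) + 1 - (k : ℝ)) * a (k - 1) x1 x2 * pd1 g x1 x2) ∧
      (g x1 x2 * pd1 (a (N - 1)) x1 x2 + pd2 (a (N - 1)) x1 x2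
        = a (N - 1) x1 x2 * pd1 g x1 x2)) := by
  constructor
  · intro h x1 x2 hx
    have hzero : ∀ k ∈ Finset.Icc 1 N, Cc N g a x1 x2 k = 0 := by
      apply aux_coeffs_zero
      intro x
      have hk := key_expansion N hN U hU g a hg ha H f hH hf hx 1 x
      rw [h x1 x2 1 x hx] at hk
      simpa [one_pow] using hk.symm
    refine ⟨?_, ?_, ?_⟩
    · have h1 := hzero 1 (Finset.mem_Icc.mpr ⟨le_refl 1, by omega⟩)
      rw [Cc, if_pos (Finset.mem_Icc.mpr ⟨le_refl 1, by omega⟩),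
        if_neg (by simp only [Finset.mem_Icc]; omega)] at h1
      simp only [Ac] at h1
      push_cast at h1
      linarith
    · intro k hk2 hkN
      have h1 := hzero k (Finset.mem_Icc.mpr ⟨by omega, by omega⟩)
      rw [Cc, if_pos (Finset.mem_Icc.mpr ⟨by omega, hkN⟩),
        if_pos (Finset.mem_Icc.mpr ⟨hk2, by omega⟩)] at h1
      simp only [Ac, Bc] at h1
      have hc : ((N - (k - 1) : ℕ) : ℝ) = (N : ℝ) + 1 - (k : ℝ) := by
        rw [Nat.cast_sub (by omega : k - 1 ≤ N), Nat.cast_sub (by omega : 1 ≤ k)]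
        push_cast; ring
      rw [hc] at h1
      linarith
    · have h1 := hzero N (Finset.mem_Icc.mpr ⟨by omega, le_refl N⟩)
      rw [Cc, if_neg (by simp only [Finset.mem_Icc]; omega),
        if_pos (Finset.mem_Icc.mpr ⟨by omega, le_refl N⟩)] at h1
      simp only [Bc] at h1
      have hc : ((N - (N - 1) : ℕ) : ℝ) = 1 := by
        rw [show N - (N - 1) = 1 by omega]; norm_num
      rw [hc] at h1
      linarith
  · intro h x1 x2 p1 p2 hx
    rw [key_expansion N hN U hU g a hg ha H f hH hf hx p1 p2]
    apply Finset.sum_eq_zero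
    intro k hk
    obtain ⟨hk1, hkN⟩ := Finset.mem_Icc.mp hk
    obtain ⟨hi, hii, hiii⟩ := h x1 x2 hx
    suffices hc : Cc N g a x1 x2 k = 0 by rw [hc, zero_mul, zero_mul]
    rcases (show k = 1 ∨ (2 ≤ k ∧ k ≤ N - 1) ∨ k = N by omega) with h1 | ⟨h2, h3⟩ | h4
    · subst h1
      rw [Cc, if_pos (Finset.mem_Icc.mpr ⟨le_refl 1, by omega⟩),
        if_neg (by simp only [Finset.mem_Icc]; omega)]
      simp only [Ac]; push_cast; linarith
    · have hK := hii k h2 h3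
      rw [Cc, if_pos (Finset.mem_Icc.mpr ⟨by omega, h3⟩),
        if_pos (Finset.mem_Icc.mpr ⟨h2, by omega⟩)]
      simp only [Ac, Bc]
      have hc : ((N - (k - 1) : ℕ) : ℝ) = (N : ℝ) + 1 - (k : ℝ) := by
        rw [Nat.cast_sub (by omega : k - 1 ≤ N), Nat.cast_sub (by omega : 1 ≤ k)]
        push_cast; ring
      rw [hc]; linarith
    · rw [h4]
      rw [Cc, if_neg (by simp only [Finset.mem_Icc]; omega),
        if_pos (Finset.mem_Icc.mpr ⟨by omega, le_refl N⟩)]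
      simp only [Bc]
      have hc : ((N - (N - 1) : ℕ) : ℝ) = 1 := by
        rw [show N - (N - 1) = 1 by omega]; norm_num
      rw [hc]; linarith
end

section
/- Let U ⊆ ℝ² be open and let g, a₁, a₂, a₃ be smooth real functions on U. Define H(x,p) = (1/2)p₁² + g(x)p₁p₂ + (1/2)p₂² and f(x,p) = a₁(x)p₁³p₂ + a₂(x)p₁²p₂² + a₃(x)p₁p₂³. Then the canonical Poisson bracket {f,H} vanishes identically on U × ℝ² if and only if the following system holds on U: a_{1,x¹} + a_{1,x²}·g = a₁·g_{x²}; a_{1,x²} + a_{2,x¹} + a_{1,x¹}·g + a_{2,x²}·g = 2a₂·g_{x²} + 3a₁·g_{x¹}; a_{3,x¹} + a_{2,x²} + a_{3,x²}·g + a_{2,x¹}·g = 3a₃·g_{x²} + 2a₂·g_{x¹}; a_{3,x²} + a_{3,x¹}·g = a₃·g_{x¹}. -/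
lemma hasDerivAt_pd1 {U : Set (ℝ × ℝ)} (hU : IsOpen U) {a : ℝ → ℝ → ℝ}
    (ha : ContDiffOn ℝ (⊤ : ℕ∞) (fun z : ℝ × ℝ => a z.1 z.2) U) {x1 x2 : ℝ} (h : (x1, x2) ∈ U) :
    HasDerivAt (fun t => a t x2) (pd1 a x1 x2) x1 := by
  have hA : DifferentiableAt ℝ (fun z : ℝ × ℝ => a z.1 z.2) (x1, x2) :=
    (ha.contDiffAt (hU.mem_nhds h)).differentiableAt (by simp)
  have hd : DifferentiableAt ℝ (fun t => a t x2) x1 :=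
    by have := hA.comp x1 ((differentiableAt_id (𝕜 := ℝ) (x := x1)).prodMk (differentiableAt_const x2)); exact this
  simpa [pd1] using hd.hasDerivAt

lemma hasDerivAt_pd2 {U : Set (ℝ × ℝ)} (hU : IsOpen U) {a : ℝ → ℝ → ℝ}
    (ha : ContDiffOn ℝ (⊤ : ℕ∞) (fun z : ℝ × ℝ => a z.1 z.2) U) {x1 x2 : ℝ} (h : (x1, x2) ∈ U) :
    HasDerivAt (fun t => a x1 t) (pd2 a x1 x2) x2 := by
  have hA : DifferentiableAt ℝ (fun z : ℝ × ℝ => a z.1 z.2) (x1, x2) :=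
    (ha.contDiffAt (hU.mem_nhds h)).differentiableAt (by simp)
  have hd : DifferentiableAt ℝ (fun t => a x1 t) x2 :=
    hA.comp x2 ((differentiableAt_const x1).prodMk differentiableAt_id)
  simpa [pd2] using hd.hasDerivAt

lemma poly_zero (c1 c2 c3 c4 : ℝ)
    (h : ∀ p1 p2 : ℝ, p1 * p2 * (c1 * p1 ^ 3 + c2 * p1 ^ 2 * p2 + c3 * p1 * p2 ^ 2 + c4 * p2 ^ 3) = 0) :
    c1 = 0 ∧ c2 = 0 ∧ c3 = 0 ∧ c4 = 0 := by
  have e1 := h 1 1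
  have e2 := h 1 (-1)
  have e3 := h 2 1
  have e4 := h 1 2
  norm_num at e1 e2 e3 e4
  refine ⟨by linarith, by linarith, by linarith, by linarith⟩

/-- Quartic case `N = 4`: the polynomial `f = a₁p₁³p₂ + a₂p₁²p₂² + a₃p₁p₂³` is a first
integral of `H = (1/2)p₁² + g p₁p₂ + (1/2)p₂²` if and only if `(g, a₁, a₂, a₃)` satisfies
the corresponding quasi-linear first-order system. -/
theorem quartic_integral_iff_system
    (U : Set (ℝ × ℝ)) (hU : IsOpen U)
    (g a1 a2 a3 : ℝ → ℝ → ℝ)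
    (hg : ContDiffOn ℝ (⊤ : ℕ∞) (fun z : ℝ × ℝ => g z.1 z.2) U)
    (ha1 : ContDiffOn ℝ (⊤ : ℕ∞) (fun z : ℝ × ℝ => a1 z.1 z.2) U)
    (ha2 : ContDiffOn ℝ (⊤ : ℕ∞) (fun z : ℝ × ℝ => a2 z.1 z.2) U)
    (ha3 : ContDiffOn ℝ (⊤ : ℕ∞) (fun z : ℝ × ℝ => a3 z.1 z.2) U)
    (H f : ℝ → ℝ → ℝ → ℝ → ℝ)
    (hH : ∀ x1 x2 p1 p2 : ℝ, H x1 x2 p1 p2 =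
      (1 / 2) * p1 ^ 2 + g x1 x2 * p1 * p2 + (1 / 2) * p2 ^ 2)
    (hf : ∀ x1 x2 p1 p2 : ℝ, f x1 x2 p1 p2 =
      a1 x1 x2 * p1 ^ 3 * p2 + a2 x1 x2 * p1 ^ 2 * p2 ^ 2 + a3 x1 x2 * p1 * p2 ^ 3) :
    (∀ x1 x2 p1 p2 : ℝ, (x1, x2) ∈ U → pbracket f H x1 x2 p1 p2 = 0) ↔
    (∀ x1 x2 : ℝ, (x1, x2) ∈ U →
      (pd1 a1 x1 x2 + pd2 a1 x1 x2 * g x1 x2 = a1 x1 x2 * pd2 g x1 x2) ∧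
      (pd2 a1 x1 x2 + pd1 a2 x1 x2 + pd1 a1 x1 x2 * g x1 x2 + pd2 a2 x1 x2 * g x1 x2
        = 2 * a2 x1 x2 * pd2 g x1 x2 + 3 * a1 x1 x2 * pd1 g x1 x2) ∧
      (pd1 a3 x1 x2 + pd2 a2 x1 x2 + pd2 a3 x1 x2 * g x1 x2 + pd1 a2 x1 x2 * g x1 x2
        = 3 * a3 x1 x2 * pd2 g x1 x2 + 2 * a2 x1 x2 * pd1 g x1 x2) ∧
      (pd2 a3 x1 x2 + pd1 a3 x1 x2 * g x1 x2 = a3 x1 x2 * pd1 g x1 x2)) := by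
  have key : ∀ x1 x2 p1 p2 : ℝ, (x1, x2) ∈ U → pbracket f H x1 x2 p1 p2 =
      p1 * p2 *
        ((pd1 a1 x1 x2 + pd2 a1 x1 x2 * g x1 x2 - a1 x1 x2 * pd2 g x1 x2) * p1 ^ 3
        + (pd2 a1 x1 x2 + pd1 a2 x1 x2 + pd1 a1 x1 x2 * g x1 x2 + pd2 a2 x1 x2 * g x1 x2
            - 2 * a2 x1 x2 * pd2 g x1 x2 - 3 * a1 x1 x2 * pd1 g x1 x2) * p1 ^ 2 * p2
        + (pd1 a3 x1 x2 + pd2 a2 x1 x2 + pd2 a3 x1 x2 * g x1 x2 + pd1 a2 x1 x2 * g x1 x2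
            - 3 * a3 x1 x2 * pd2 g x1 x2 - 2 * a2 x1 x2 * pd1 g x1 x2) * p1 * p2 ^ 2
        + (pd2 a3 x1 x2 + pd1 a3 x1 x2 * g x1 x2 - a3 x1 x2 * pd1 g x1 x2) * p2 ^ 3) := by
    intro x1 x2 p1 p2 hx
    have dg1 := hasDerivAt_pd1 hU hg hx
    have dg2 := hasDerivAt_pd2 hU hg hx
    have d11 := hasDerivAt_pd1 hU ha1 hx
    have d12 := hasDerivAt_pd2 hU ha1 hx
    have d21 := hasDerivAt_pd1 hU ha2 hx
    have d22 := hasDerivAt_pd2 hU ha2 hx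
    have d31 := hasDerivAt_pd1 hU ha3 hx
    have d32 := hasDerivAt_pd2 hU ha3 hx
    have dfx1 : deriv (fun t => f t x2 p1 p2) x1 =
        pd1 a1 x1 x2 * p1 ^ 3 * p2 + pd1 a2 x1 x2 * p1 ^ 2 * p2 ^ 2
          + pd1 a3 x1 x2 * p1 * p2 ^ 3 := by
      simp only [hf]
      exact ((((d11.mul_const _).mul_const _).add
        ((d21.mul_const _).mul_const _)).add ((d31.mul_const _).mul_const _)).deriv
    have dfx2 : deriv (fun t => f x1 t p1 p2) x2 =
        pd2 a1 x1 x2 * p1 ^ 3 * p2 + pd2 a2 x1 x2 * p1 ^ 2 * p2 ^ 2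
          + pd2 a3 x1 x2 * p1 * p2 ^ 3 := by
      simp only [hf]
      exact ((((d12.mul_const _).mul_const _).add
        ((d22.mul_const _).mul_const _)).add ((d32.mul_const _).mul_const _)).deriv
    have dHx1 : deriv (fun t => H t x2 p1 p2) x1 = pd1 g x1 x2 * p1 * p2 := by
      simp only [hH]
      have h1 : HasDerivAt (fun t => (1 / 2) * p1 ^ 2 + g t x2 * p1 * p2 + (1 / 2) * p2 ^ 2)
          (0 + pd1 g x1 x2 * p1 * p2 + 0) x1 :=
        ((hasDerivAt_const _ _).add ((dg1.mul_const p1).mul_const p2)).add (hasDerivAt_const _ _)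
      rw [h1.deriv]; ring
    have dHx2 : deriv (fun t => H x1 t p1 p2) x2 = pd2 g x1 x2 * p1 * p2 := by
      simp only [hH]
      have h1 : HasDerivAt (fun t => (1 / 2) * p1 ^ 2 + g x1 t * p1 * p2 + (1 / 2) * p2 ^ 2)
          (0 + pd2 g x1 x2 * p1 * p2 + 0) x2 :=
        ((hasDerivAt_const _ _).add ((dg2.mul_const p1).mul_const p2)).add (hasDerivAt_const _ _)
      rw [h1.deriv]; ring
    have dHp1 : deriv (fun t => H x1 x2 t p2) p1 = p1 + g x1 x2 * p2 := by
      simp only [hH]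
      have h1 : HasDerivAt (fun t : ℝ => (1 / 2) * t ^ 2 + g x1 x2 * t * p2 + (1 / 2) * p2 ^ 2)
          ((1 / 2) * ((2 : ℕ) * p1 ^ (2 - 1)) + g x1 x2 * 1 * p2 + 0) p1 :=
        (((hasDerivAt_pow 2 p1).const_mul _).add
          (((hasDerivAt_id' p1).const_mul (g x1 x2)).mul_const p2)).add (hasDerivAt_const _ _)
      rw [h1.deriv]; push_cast; ring
    have dHp2 : deriv (fun t => H x1 x2 p1 t) p2 = g x1 x2 * p1 + p2 := by
      simp only [hH]
      have h1 : HasDerivAt (fun t : ℝ => (1 / 2) * p1 ^ 2 + g x1 x2 * p1 * t + (1 / 2) * t ^ 2)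
          (0 + (g x1 x2 * p1) * 1 + (1 / 2) * ((2 : ℕ) * p2 ^ (2 - 1))) p2 :=
        ((hasDerivAt_const _ _).add ((hasDerivAt_id' p2).const_mul (g x1 x2 * p1))).add
          ((hasDerivAt_pow 2 p2).const_mul _)
      rw [h1.deriv]; push_cast; ring
    have dfp1 : deriv (fun t => f x1 x2 t p2) p1 =
        3 * a1 x1 x2 * p1 ^ 2 * p2 + 2 * a2 x1 x2 * p1 * p2 ^ 2 + a3 x1 x2 * p2 ^ 3 := by
      simp only [hf]
      have h1 : HasDerivAt (fun t : ℝ =>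
          a1 x1 x2 * t ^ 3 * p2 + a2 x1 x2 * t ^ 2 * p2 ^ 2 + a3 x1 x2 * t * p2 ^ 3)
          ((a1 x1 x2 * ((3 : ℕ) * p1 ^ (3 - 1))) * p2
            + (a2 x1 x2 * ((2 : ℕ) * p1 ^ (2 - 1))) * p2 ^ 2
            + (a3 x1 x2 * 1) * p2 ^ 3) p1 :=
        ((((hasDerivAt_pow 3 p1).const_mul _).mul_const p2).add
          (((hasDerivAt_pow 2 p1).const_mul _).mul_const (p2 ^ 2))).add
          (((hasDerivAt_id' p1).const_mul _).mul_const (p2 ^ 3))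
      rw [h1.deriv]; push_cast; ring
    have dfp2 : deriv (fun t => f x1 x2 p1 t) p2 =
        a1 x1 x2 * p1 ^ 3 + 2 * a2 x1 x2 * p1 ^ 2 * p2 + 3 * a3 x1 x2 * p1 * p2 ^ 2 := by
      simp only [hf]
      have h1 : HasDerivAt (fun t : ℝ =>
          a1 x1 x2 * p1 ^ 3 * t + a2 x1 x2 * p1 ^ 2 * t ^ 2 + a3 x1 x2 * p1 * t ^ 3)
          ((a1 x1 x2 * p1 ^ 3) * 1
            + (a2 x1 x2 * p1 ^ 2) * ((2 : ℕ) * p2 ^ (2 - 1))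
            + (a3 x1 x2 * p1) * ((3 : ℕ) * p2 ^ (3 - 1))) p2 :=
        ((((hasDerivAt_id' p2).const_mul _)).add
          ((hasDerivAt_pow 2 p2).const_mul _)).add
          ((hasDerivAt_pow 3 p2).const_mul _)
      rw [h1.deriv]; push_cast; ring
    rw [pbracket, dfx1, dfx2, dHx1, dHx2, dHp1, dHp2, dfp1, dfp2]
    ring
  constructor
  · intro hb x1 x2 hx
    obtain ⟨hc1, hc2, hc3, hc4⟩ := poly_zero _ _ _ _
      (fun p1 p2 => (key x1 x2 p1 p2 hx).symm.trans (hb x1 x2 p1 p2 hx))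
    exact ⟨by linarith, by linarith, by linarith, by linarith⟩
  · intro h x1 x2 p1 p2 hx
    obtain ⟨e1, e2, e3, e4⟩ := h x1 x2 hx
    rw [key x1 x2 p1 p2 hx]
    linear_combination p1 * p2 * (p1 ^ 3 * e1 + p1 ^ 2 * p2 * e2 + p1 * p2 ^ 2 * e3 + p2 ^ 3 * e4)
end

section
/- Let N ≥ 2, let U ⊆ ℝ² be open with coordinates (x,y), let a be a smooth positive function on U, and let b₁, …, b_{N−1} be smooth real functions on U that are pairwise distinct at every point of U. Define, for (x,y) ∈ U and q ∈ ℝ, λ̃(x,y,q) = a(x,y)^{−1/2}·(1+q²)^{−N/2}·∏_{m=1}^{N−1}(q − b_m(x,y)). Then λ̃ satisfies the PDE λ̃_y = a^{−1/2}·q·λ̃_x + (1+q²)·λ̃_q·(a^{−1/2})_x at every (x,y,q) with q ∉ {b₁(x,y),…,b_{N−1}(x,y)} if and only if (a, b₁, …, b_{N−1}) satisfies the hydrodynamic-type system: a_y = 2a^{1/2}·(∑_{m=1}^{N−1} b_m)_x + a^{−1/2}·a_x·(∑_{m=1}^{N−1} b_m), and for each k = 1,…,N−1: (b_k)_y = a^{−1/2}·b_k·(b_k)_x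 − (1 + b_k²)·(a^{−1/2})_x. -/
/-- Partial derivative in the first variable (`x`) of a function of two real variables. -/
noncomputable def pdx (g : ℝ → ℝ → ℝ) (x y : ℝ) : ℝ := deriv (fun t => g t y) x

/-- Partial derivative in the second variable (`y`) of a function of two real variables. -/
noncomputable def pdy (g : ℝ → ℝ → ℝ) (x y : ℝ) : ℝ := deriv (fun t => g x t) y

private lemma hasDerivAt_pdx_cd {U : Set (ℝ × ℝ)} (hU : IsOpen U) {f : ℝ → ℝ → ℝ}
    (hf : ContDiffOn ℝ (⊤ : ℕ∞) (fun z : ℝ × ℝ => f z.1 z.2) U) {x y : ℝ} (hxy : (x, y) ∈ U) :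
    HasDerivAt (fun t => f t y) (pdx f x y) x := by
  have h1 : DifferentiableAt ℝ (fun z : ℝ × ℝ => f z.1 z.2) (x, y) :=
    (hf.contDiffAt (hU.mem_nhds hxy)).differentiableAt (by simp)
  exact (h1.comp x (differentiableAt_id.prodMk (differentiableAt_const y))).hasDerivAt

private lemma hasDerivAt_pdy_cd {U : Set (ℝ × ℝ)} (hU : IsOpen U) {f : ℝ → ℝ → ℝ}
    (hf : ContDiffOn ℝ (⊤ : ℕ∞) (fun z : ℝ × ℝ => f z.1 z.2) U) {x y : ℝ} (hxy : (x, y) ∈ U) :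
    HasDerivAt (fun t => f x t) (pdy f x y) y := by
  have h1 : DifferentiableAt ℝ (fun z : ℝ × ℝ => f z.1 z.2) (x, y) :=
    (hf.contDiffAt (hU.mem_nhds hxy)).differentiableAt (by simp)
  exact (h1.comp y ((differentiableAt_const x).prodMk differentiableAt_id)).hasDerivAt

private lemma key_lemma (N : ℕ) (hN : 2 ≤ N)
    (U : Set (ℝ × ℝ)) (hU : IsOpen U)
    (a : ℝ → ℝ → ℝ) (b : ℕ → ℝ → ℝ → ℝ)
    (ha : ContDiffOn ℝ (⊤ : ℕ∞) (fun z : ℝ × ℝ => a z.1 z.2) U)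
    (hapos : ∀ x y : ℝ, (x, y) ∈ U → 0 < a x y)
    (hb : ∀ m ∈ Finset.Icc 1 (N - 1), ContDiffOn ℝ (⊤ : ℕ∞) (fun z : ℝ × ℝ => b m z.1 z.2) U)
    (lam : ℝ → ℝ → ℝ → ℝ)
    (hlam : ∀ x y q : ℝ, lam x y q =
      a x y ^ (-(1 : ℝ) / 2) * (1 + q ^ 2) ^ (-(N : ℝ) / 2) *
        ∏ m ∈ Finset.Icc 1 (N - 1), (q - b m x y))
    (x y q : ℝ) (hxy : (x, y) ∈ U) :
    (deriv (fun t => lam x t q) y =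
        a x y ^ (-(1 : ℝ) / 2) * q * deriv (fun t => lam t y q) x
        + (1 + q ^ 2) * deriv (fun t => lam x y t) q
          * pdx (fun u v => a u v ^ (-(1 : ℝ) / 2)) x y) ↔
    ((pdy a x y * (-(1:ℝ)/2) * a x y ^ (-(1:ℝ)/2 - 1)
        + a x y ^ (-(1:ℝ)/2) * a x y ^ (-(1:ℝ)/2) * ∑ m ∈ Finset.Icc 1 (N-1), pdx (b m) x y
        - pdx a x y * (-(1:ℝ)/2) * a x y ^ (-(1:ℝ)/2 - 1) * a x y ^ (-(1:ℝ)/2)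
            * ∑ m ∈ Finset.Icc 1 (N-1), b m x y)
      * ∏ m ∈ Finset.Icc 1 (N-1), (q - b m x y)
      = ∑ k ∈ Finset.Icc 1 (N-1),
          (a x y ^ (-(1:ℝ)/2) * (pdy (b k) x y
             - a x y ^ (-(1:ℝ)/2) * b k x y * pdx (b k) x y
             + (1 + b k x y ^ 2) * pdx (fun u v => a u v ^ (-(1:ℝ)/2)) x y))
          * ∏ m ∈ (Finset.Icc 1 (N-1)).erase k, (q - b m x y)) := by
  classical
  have hpos := hapos x y hxy
  have hax : HasDerivAt (fun t => a t y) (pdx a x y) x := hasDerivAt_pdx_cd hU ha hxy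
  have hay : HasDerivAt (fun t => a x t) (pdy a x y) y := hasDerivAt_pdy_cd hU ha hxy
  have hAx : HasDerivAt (fun t => a t y ^ (-(1:ℝ)/2))
      (pdx a x y * (-(1:ℝ)/2) * a x y ^ (-(1:ℝ)/2 - 1)) x :=
    hax.rpow_const (Or.inl hpos.ne')
  have hAy : HasDerivAt (fun t => a x t ^ (-(1:ℝ)/2))
      (pdy a x y * (-(1:ℝ)/2) * a x y ^ (-(1:ℝ)/2 - 1)) y :=
    hay.rpow_const (Or.inl hpos.ne')
  have hAXv : pdx (fun u v => a u v ^ (-(1:ℝ)/2)) x y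
      = pdx a x y * (-(1:ℝ)/2) * a x y ^ (-(1:ℝ)/2 - 1) := hAx.deriv
  have h1q : (0:ℝ) < 1 + q^2 := by positivity
  have hQx : HasDerivAt (fun t => ∏ m ∈ Finset.Icc 1 (N-1), (q - b m t y))
      (∑ k ∈ Finset.Icc 1 (N-1), (∏ m ∈ (Finset.Icc 1 (N-1)).erase k, (q - b m x y))
        • -pdx (b k) x y) x :=
    HasDerivAt.fun_finsetProd (fun k hk => (hasDerivAt_pdx_cd hU (hb k hk) hxy).const_sub q)
  have hQy : HasDerivAt (fun t => ∏ m ∈ Finset.Icc 1 (N-1), (q - b m x t))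
      (∑ k ∈ Finset.Icc 1 (N-1), (∏ m ∈ (Finset.Icc 1 (N-1)).erase k, (q - b m x y))
        • -pdy (b k) x y) y :=
    HasDerivAt.fun_finsetProd (fun k hk => (hasDerivAt_pdy_cd hU (hb k hk) hxy).const_sub q)
  have hQq : HasDerivAt (fun p => ∏ m ∈ Finset.Icc 1 (N-1), (p - b m x y))
      (∑ k ∈ Finset.Icc 1 (N-1), (∏ m ∈ (Finset.Icc 1 (N-1)).erase k, (q - b m x y))
        • (1:ℝ)) q :=
    HasDerivAt.fun_finsetProd (fun k hk => (hasDerivAt_id q).sub_const (b k x y))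
  have hPq : HasDerivAt (fun p => (1 + p^2) ^ (-(N:ℝ)/2))
      (((2:ℕ):ℝ) * q ^ 1 * (-(N:ℝ)/2) * (1 + q^2) ^ (-(N:ℝ)/2 - 1)) q :=
    ((hasDerivAt_pow 2 q).const_add 1).rpow_const (Or.inl h1q.ne')
  have hfy : (fun t => lam x t q) = fun t =>
      a x t ^ (-(1:ℝ)/2) * (1 + q^2) ^ (-(N:ℝ)/2) * ∏ m ∈ Finset.Icc 1 (N-1), (q - b m x t) :=
    funext fun t => hlam x t q
  have hfx : (fun t => lam t y q) = fun t =>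
      a t y ^ (-(1:ℝ)/2) * (1 + q^2) ^ (-(N:ℝ)/2) * ∏ m ∈ Finset.Icc 1 (N-1), (q - b m t y) :=
    funext fun t => hlam t y q
  have hfq : (fun t => lam x y t) = fun t =>
      a x y ^ (-(1:ℝ)/2) * (1 + t^2) ^ (-(N:ℝ)/2) * ∏ m ∈ Finset.Icc 1 (N-1), (t - b m x y) :=
    funext fun t => hlam x y t
  have hdy : deriv (fun t => lam x t q) y =
      pdy a x y * (-(1:ℝ)/2) * a x y ^ (-(1:ℝ)/2 - 1) * (1 + q^2) ^ (-(N:ℝ)/2)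
        * ∏ m ∈ Finset.Icc 1 (N-1), (q - b m x y)
      + a x y ^ (-(1:ℝ)/2) * (1 + q^2) ^ (-(N:ℝ)/2)
        * ∑ k ∈ Finset.Icc 1 (N-1), (∏ m ∈ (Finset.Icc 1 (N-1)).erase k, (q - b m x y))
            • -pdy (b k) x y := by
    rw [hfy]; exact ((hAy.mul_const _).mul hQy).deriv
  have hdx : deriv (fun t => lam t y q) x =
      pdx a x y * (-(1:ℝ)/2) * a x y ^ (-(1:ℝ)/2 - 1) * (1 + q^2) ^ (-(N:ℝ)/2)
        * ∏ m ∈ Finset.Icc 1 (N-1), (q - b m x y)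
      + a x y ^ (-(1:ℝ)/2) * (1 + q^2) ^ (-(N:ℝ)/2)
        * ∑ k ∈ Finset.Icc 1 (N-1), (∏ m ∈ (Finset.Icc 1 (N-1)).erase k, (q - b m x y))
            • -pdx (b k) x y := by
    rw [hfx]; exact ((hAx.mul_const _).mul hQx).deriv
  have hdq : deriv (fun t => lam x y t) q =
      a x y ^ (-(1:ℝ)/2) * (((2:ℕ):ℝ) * q ^ 1 * (-(N:ℝ)/2) * (1 + q^2) ^ (-(N:ℝ)/2 - 1))
        * ∏ m ∈ Finset.Icc 1 (N-1), (q - b m x y)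
      + a x y ^ (-(1:ℝ)/2) * (1 + q^2) ^ (-(N:ℝ)/2)
        * ∑ k ∈ Finset.Icc 1 (N-1), (∏ m ∈ (Finset.Icc 1 (N-1)).erase k, (q - b m x y))
            • (1:ℝ) := by
    rw [hfq]; exact ((hPq.const_mul _).mul hQq).deriv

  rw [hdy, hdx, hdq, hAXv]
  have hPne : ((1 + q^2) ^ (-(N:ℝ)/2)) ≠ 0 := (Real.rpow_pos_of_pos h1q _).ne'
  have hP2 : (1 + q^2) * (1 + q^2) ^ (-(N:ℝ)/2 - 1) = (1 + q^2) ^ (-(N:ℝ)/2) := by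
    have h := Real.rpow_add h1q 1 (-(N:ℝ)/2 - 1)
    rw [Real.rpow_one] at h
    rw [← h, show (1:ℝ) + (-(N:ℝ)/2 - 1) = -(N:ℝ)/2 by ring]
  have hfac : ∀ k ∈ Finset.Icc 1 (N-1),
      (q - b k x y) * ∏ m ∈ (Finset.Icc 1 (N-1)).erase k, (q - b m x y)
      = ∏ m ∈ Finset.Icc 1 (N-1), (q - b m x y) :=
    fun k hk => Finset.mul_prod_erase _ (fun m => q - b m x y) hk
  have hcard : (((Finset.Icc 1 (N-1)).card : ℕ) : ℝ) = (N:ℝ) - 1 := by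
    have h1 : (Finset.Icc 1 (N-1)).card = N - 1 := by rw [Nat.card_Icc]; omega
    rw [h1, Nat.cast_sub (by omega : 1 ≤ N), Nat.cast_one]
  have hEy : (∑ k ∈ Finset.Icc 1 (N-1), (∏ m ∈ (Finset.Icc 1 (N-1)).erase k, (q - b m x y))
        • -pdy (b k) x y)
      = -∑ k ∈ Finset.Icc 1 (N-1), (∏ m ∈ (Finset.Icc 1 (N-1)).erase k, (q - b m x y))
          * pdy (b k) x y := by
    simp [smul_eq_mul, mul_neg, Finset.sum_neg_distrib]
  have hEx : (∑ k ∈ Finset.Icc 1 (N-1), (∏ m ∈ (Finset.Icc 1 (N-1)).erase k, (q - b m x y))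
        • -pdx (b k) x y)
      = -∑ k ∈ Finset.Icc 1 (N-1), (∏ m ∈ (Finset.Icc 1 (N-1)).erase k, (q - b m x y))
          * pdx (b k) x y := by
    simp [smul_eq_mul, mul_neg, Finset.sum_neg_distrib]
  have hEq : (∑ k ∈ Finset.Icc 1 (N-1), (∏ m ∈ (Finset.Icc 1 (N-1)).erase k, (q - b m x y))
        • (1:ℝ))
      = ∑ k ∈ Finset.Icc 1 (N-1), ∏ m ∈ (Finset.Icc 1 (N-1)).erase k, (q - b m x y) := by
    simp [smul_eq_mul]
  have R1 : q * (∑ k ∈ Finset.Icc 1 (N-1), (∏ m ∈ (Finset.Icc 1 (N-1)).erase k, (q - b m x y))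
        * pdx (b k) x y)
      - (∑ k ∈ Finset.Icc 1 (N-1), (∏ m ∈ (Finset.Icc 1 (N-1)).erase k, (q - b m x y))
        * (b k x y * pdx (b k) x y))
      = (∑ k ∈ Finset.Icc 1 (N-1), pdx (b k) x y) * ∏ m ∈ Finset.Icc 1 (N-1), (q - b m x y) := by
    rw [Finset.mul_sum, ← Finset.sum_sub_distrib, Finset.sum_mul]
    refine Finset.sum_congr rfl fun k hk => ?_
    rw [← hfac k hk]; ring
  have R2 : q^2 * (∑ k ∈ Finset.Icc 1 (N-1), ∏ m ∈ (Finset.Icc 1 (N-1)).erase k, (q - b m x y))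
      - (∑ k ∈ Finset.Icc 1 (N-1), (∏ m ∈ (Finset.Icc 1 (N-1)).erase k, (q - b m x y))
        * b k x y ^ 2)
      = ((N:ℝ) - 1) * q * ∏ m ∈ Finset.Icc 1 (N-1), (q - b m x y)
        + (∑ k ∈ Finset.Icc 1 (N-1), b k x y) * ∏ m ∈ Finset.Icc 1 (N-1), (q - b m x y) := by
    rw [Finset.mul_sum, ← Finset.sum_sub_distrib]
    have h2 : ∀ k ∈ Finset.Icc 1 (N-1),
        q^2 * (∏ m ∈ (Finset.Icc 1 (N-1)).erase k, (q - b m x y))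
          - (∏ m ∈ (Finset.Icc 1 (N-1)).erase k, (q - b m x y)) * b k x y ^ 2
        = q * ∏ m ∈ Finset.Icc 1 (N-1), (q - b m x y)
          + b k x y * ∏ m ∈ Finset.Icc 1 (N-1), (q - b m x y) := by
      intro k hk
      rw [← hfac k hk]; ring
    rw [Finset.sum_congr rfl h2, Finset.sum_add_distrib, Finset.sum_const, ← Finset.sum_mul,
      nsmul_eq_mul, hcard]
    ring
  have hS : (∑ k ∈ Finset.Icc 1 (N-1),
        (a x y ^ (-(1:ℝ)/2) * (pdy (b k) x y
           - a x y ^ (-(1:ℝ)/2) * b k x y * pdx (b k) x y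
           + (1 + b k x y ^ 2) * (pdx a x y * (-(1:ℝ)/2) * a x y ^ (-(1:ℝ)/2 - 1))))
        * ∏ m ∈ (Finset.Icc 1 (N-1)).erase k, (q - b m x y))
      = a x y ^ (-(1:ℝ)/2) * (∑ k ∈ Finset.Icc 1 (N-1),
          (∏ m ∈ (Finset.Icc 1 (N-1)).erase k, (q - b m x y)) * pdy (b k) x y)
        - a x y ^ (-(1:ℝ)/2) * a x y ^ (-(1:ℝ)/2) * (∑ k ∈ Finset.Icc 1 (N-1),
          (∏ m ∈ (Finset.Icc 1 (N-1)).erase k, (q - b m x y)) * (b k x y * pdx (b k) x y))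
        + a x y ^ (-(1:ℝ)/2) * (pdx a x y * (-(1:ℝ)/2) * a x y ^ (-(1:ℝ)/2 - 1))
          * (∑ k ∈ Finset.Icc 1 (N-1), ∏ m ∈ (Finset.Icc 1 (N-1)).erase k, (q - b m x y))
        + a x y ^ (-(1:ℝ)/2) * (pdx a x y * (-(1:ℝ)/2) * a x y ^ (-(1:ℝ)/2 - 1))
          * (∑ k ∈ Finset.Icc 1 (N-1),
            (∏ m ∈ (Finset.Icc 1 (N-1)).erase k, (q - b m x y)) * b k x y ^ 2) := by
    rw [Finset.mul_sum, Finset.mul_sum, Finset.mul_sum, Finset.mul_sum,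
      ← Finset.sum_sub_distrib, ← Finset.sum_add_distrib, ← Finset.sum_add_distrib]
    exact Finset.sum_congr rfl fun k hk => by ring
  constructor
  · intro h
    apply mul_left_cancel₀ hPne
    linear_combination h
      - (a x y ^ (-(1:ℝ)/2) * (1 + q^2) ^ (-(N:ℝ)/2)) * hEy
      + (q * a x y ^ (-(1:ℝ)/2) * a x y ^ (-(1:ℝ)/2) * (1 + q^2) ^ (-(N:ℝ)/2)) * hEx
      + ((1 + q^2) * a x y ^ (-(1:ℝ)/2) * (1 + q^2) ^ (-(N:ℝ)/2)
          * (pdx a x y * (-(1:ℝ)/2) * a x y ^ (-(1:ℝ)/2 - 1))) * hEq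
      - ((N:ℝ) * q * a x y ^ (-(1:ℝ)/2)
          * (pdx a x y * (-(1:ℝ)/2) * a x y ^ (-(1:ℝ)/2 - 1))
          * ∏ m ∈ Finset.Icc 1 (N-1), (q - b m x y)) * hP2
      - ((1 + q^2) ^ (-(N:ℝ)/2)) * hS
      - ((1 + q^2) ^ (-(N:ℝ)/2) * a x y ^ (-(1:ℝ)/2) * a x y ^ (-(1:ℝ)/2)) * R1
      + ((1 + q^2) ^ (-(N:ℝ)/2) * a x y ^ (-(1:ℝ)/2)
          * (pdx a x y * (-(1:ℝ)/2) * a x y ^ (-(1:ℝ)/2 - 1))) * R2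
  · intro h
    linear_combination ((1 + q^2) ^ (-(N:ℝ)/2)) * h
      + (a x y ^ (-(1:ℝ)/2) * (1 + q^2) ^ (-(N:ℝ)/2)) * hEy
      - (q * a x y ^ (-(1:ℝ)/2) * a x y ^ (-(1:ℝ)/2) * (1 + q^2) ^ (-(N:ℝ)/2)) * hEx
      - ((1 + q^2) * a x y ^ (-(1:ℝ)/2) * (1 + q^2) ^ (-(N:ℝ)/2)
          * (pdx a x y * (-(1:ℝ)/2) * a x y ^ (-(1:ℝ)/2 - 1))) * hEq
      + ((N:ℝ) * q * a x y ^ (-(1:ℝ)/2)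
          * (pdx a x y * (-(1:ℝ)/2) * a x y ^ (-(1:ℝ)/2 - 1))
          * ∏ m ∈ Finset.Icc 1 (N-1), (q - b m x y)) * hP2
      + ((1 + q^2) ^ (-(N:ℝ)/2)) * hS
      + ((1 + q^2) ^ (-(N:ℝ)/2) * a x y ^ (-(1:ℝ)/2) * a x y ^ (-(1:ℝ)/2)) * R1
      - ((1 + q^2) ^ (-(N:ℝ)/2) * a x y ^ (-(1:ℝ)/2)
          * (pdx a x y * (-(1:ℝ)/2) * a x y ^ (-(1:ℝ)/2 - 1))) * R2


private lemma sum_sep (s : Finset ℕ) {B : ℕ → ℝ}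
    (hB : ∀ i ∈ s, ∀ j ∈ s, i ≠ j → B i ≠ B j) {C : ℝ} {c : ℕ → ℝ}
    (h : ∀ q : ℝ, (∀ m ∈ s, q ≠ B m) →
      C * ∏ m ∈ s, (q - B m) = ∑ k ∈ s, c k * ∏ m ∈ s.erase k, (q - B m)) :
    C = 0 ∧ ∀ k ∈ s, c k = 0 := by
  classical
  have hinf : {q : ℝ | ∀ m ∈ s, q ≠ B m}.Infinite := by
    have hfin : (↑(s.image B) : Set ℝ).Finite := (s.image B).finite_toSet
    have hset : {q : ℝ | ∀ m ∈ s, q ≠ B m} = (↑(s.image B) : Set ℝ)ᶜ := by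
      ext q
      simp only [Set.mem_setOf_eq, Set.mem_compl_iff, Finset.coe_image, Set.mem_image,
        Finset.mem_coe, not_exists, not_and]
      constructor
      · intro hq m hm heq; exact hq m hm heq.symm
      · intro hq m hm heq; exact hq m hm heq.symm
    rw [hset]; exact hfin.infinite_compl
  set p : Polynomial ℝ := Polynomial.C C * ∏ m ∈ s, (Polynomial.X - Polynomial.C (B m))
      - ∑ k ∈ s, Polynomial.C (c k) * ∏ m ∈ s.erase k, (Polynomial.X - Polynomial.C (B m))
      with hp
  have heval : ∀ q : ℝ, p.eval q =
      C * ∏ m ∈ s, (q - B m) - ∑ k ∈ s, c k * ∏ m ∈ s.erase k, (q - B m) := by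
    intro q
    simp [hp, Polynomial.eval_prod, Polynomial.eval_finset_sum]
  have hp0 : p = 0 := by
    apply Polynomial.eq_zero_of_infinite_isRoot
    apply hinf.mono
    intro q hq
    simp only [Set.mem_setOf_eq, Polynomial.IsRoot, heval]
    rw [h q hq]; ring
  have hall : ∀ q : ℝ, C * ∏ m ∈ s, (q - B m) = ∑ k ∈ s, c k * ∏ m ∈ s.erase k, (q - B m) := by
    intro q
    have h2 := heval q
    rw [hp0, Polynomial.eval_zero] at h2
    linarith
  have hc : ∀ k ∈ s, c k = 0 := by
    intro j hj
    have h1 := hall (B j)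
    have hL : C * ∏ m ∈ s, (B j - B m) = 0 :=
      mul_eq_zero_of_right _ (Finset.prod_eq_zero hj (sub_self _))
    have h2 : ∑ k ∈ s, c k * ∏ m ∈ s.erase k, (B j - B m)
        = c j * ∏ m ∈ s.erase j, (B j - B m) := by
      apply Finset.sum_eq_single_of_mem j hj
      intro k hk hkj
      exact mul_eq_zero_of_right _
        (Finset.prod_eq_zero (Finset.mem_erase.mpr ⟨hkj.symm, hj⟩) (sub_self _))
    have hne : ∏ m ∈ s.erase j, (B j - B m) ≠ 0 := by
      rw [Finset.prod_ne_zero_iff]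
      intro m hm
      exact sub_ne_zero.mpr (hB j hj m (Finset.mem_of_mem_erase hm) (Finset.mem_erase.mp hm).1.symm)
    have h3 : c j * ∏ m ∈ s.erase j, (B j - B m) = 0 := by rw [← h2, ← h1, hL]
    exact (mul_eq_zero.mp h3).resolve_right hne
  refine ⟨?_, hc⟩
  obtain ⟨q0, hq0⟩ := hinf.nonempty
  have h1 := hall q0
  have hsum0 : ∑ k ∈ s, c k * ∏ m ∈ s.erase k, (q0 - B m) = 0 :=
    Finset.sum_eq_zero fun k hk => by rw [hc k hk, zero_mul]
  have hQne : ∏ m ∈ s, (q0 - B m) ≠ 0 :=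
    Finset.prod_ne_zero_iff.mpr fun m hm => sub_ne_zero.mpr (hq0 m hm)
  have h3 : C * ∏ m ∈ s, (q0 - B m) = 0 := by rw [h1, hsum0]
  exact (mul_eq_zero.mp h3).resolve_right hQne


private lemma aux1 {va : ℝ} (h : 0 < va) (ay ax SBx SB : ℝ) :
    (ay * (-(1:ℝ)/2) * va ^ (-(1:ℝ)/2 - 1)
      + va ^ (-(1:ℝ)/2) * va ^ (-(1:ℝ)/2) * SBx
      - ax * (-(1:ℝ)/2) * va ^ (-(1:ℝ)/2 - 1) * va ^ (-(1:ℝ)/2) * SB = 0)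
    ↔ ay = 2 * va ^ ((1:ℝ)/2) * SBx + va ^ (-(1:ℝ)/2) * ax * SB := by
  have hw : (0:ℝ) < va ^ ((1:ℝ)/2) := Real.rpow_pos_of_pos h _
  have hw2 : va ^ ((1:ℝ)/2) * va ^ ((1:ℝ)/2) = va := by
    rw [← Real.rpow_add h]; norm_num
  have hA : va ^ (-(1:ℝ)/2) = (va ^ ((1:ℝ)/2))⁻¹ := by
    rw [show (-(1:ℝ)/2) = -((1:ℝ)/2) by norm_num, Real.rpow_neg h.le]
  have hA3 : va ^ (-(1:ℝ)/2 - 1) = (va ^ ((1:ℝ)/2))⁻¹ * va⁻¹ := by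
    rw [show (-(1:ℝ)/2 - 1) = -((1:ℝ)/2) + (-1) by norm_num, Real.rpow_add h,
      Real.rpow_neg_one, Real.rpow_neg h.le]
  rw [hA, hA3]
  set w := va ^ ((1:ℝ)/2) with hwdef
  have hvane : va ≠ 0 := h.ne'
  have hwne : w ≠ 0 := hw.ne'
  constructor
  · intro h'
    field_simp at h'
    rw [← hw2] at h'
    have hX : -ay * w + 2 * SBx * w^2 + ax * SB = 0 := by
      have h5 : (2 * w^5 : ℝ) ≠ 0 := by positivity
      apply mul_left_cancel₀ h5
      rw [mul_zero]
      linear_combination 2 * w^5 * h'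
    field_simp
    linear_combination -hX
  · intro h'
    rw [h', ← hw2]
    field_simp
    ring


/-- In semi-geodesic coordinates `(x,y)`, the function
`λ̃(x,y,q) = a^{−1/2}(1+q²)^{−N/2}∏_{m=1}^{N−1}(q−b_m)` satisfies the Liouville-type
equation `λ̃_y = a^{−1/2}qλ̃_x + (1+q²)λ̃_q(a^{−1/2})_x` away from the roots `b_m` iff
`(a, b₁, …, b_{N−1})` satisfies the hydrodynamic-type system (uno). -/
theorem liouville_equation_iff_hydrodynamic_system
    (N : ℕ) (hN : 2 ≤ N)
    (U : Set (ℝ × ℝ)) (hU : IsOpen U)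
    (a : ℝ → ℝ → ℝ) (b : ℕ → ℝ → ℝ → ℝ)
    (ha : ContDiffOn ℝ (⊤ : ℕ∞) (fun z : ℝ × ℝ => a z.1 z.2) U)
    (hapos : ∀ x y : ℝ, (x, y) ∈ U → 0 < a x y)
    (hb : ∀ m ∈ Finset.Icc 1 (N - 1), ContDiffOn ℝ (⊤ : ℕ∞) (fun z : ℝ × ℝ => b m z.1 z.2) U)
    (hdist : ∀ x y : ℝ, (x, y) ∈ U → ∀ i ∈ Finset.Icc 1 (N - 1),
      ∀ j ∈ Finset.Icc 1 (N - 1), i ≠ j → b i x y ≠ b j x y)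
    (lam : ℝ → ℝ → ℝ → ℝ)
    (hlam : ∀ x y q : ℝ, lam x y q =
      a x y ^ (-(1 : ℝ) / 2) * (1 + q ^ 2) ^ (-(N : ℝ) / 2) *
        ∏ m ∈ Finset.Icc 1 (N - 1), (q - b m x y)) :
    (∀ x y q : ℝ, (x, y) ∈ U → (∀ m ∈ Finset.Icc 1 (N - 1), q ≠ b m x y) →
      deriv (fun t => lam x t q) y =
        a x y ^ (-(1 : ℝ) / 2) * q * deriv (fun t => lam t y q) x
        + (1 + q ^ 2) * deriv (fun t => lam x y t) q
          * pdx (fun u v => a u v ^ (-(1 : ℝ) / 2)) x y) ↔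
    (∀ x y : ℝ, (x, y) ∈ U →
      (pdy a x y =
        2 * a x y ^ ((1 : ℝ) / 2)
          * pdx (fun u v => ∑ m ∈ Finset.Icc 1 (N - 1), b m u v) x y
        + a x y ^ (-(1 : ℝ) / 2) * pdx a x y * ∑ m ∈ Finset.Icc 1 (N - 1), b m x y) ∧
      (∀ k ∈ Finset.Icc 1 (N - 1),
        pdy (b k) x y =
          a x y ^ (-(1 : ℝ) / 2) * b k x y * pdx (b k) x y
          - (1 + b k x y ^ 2) * pdx (fun u v => a u v ^ (-(1 : ℝ) / 2)) x y)) := by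
  have hSBxEq : ∀ x y : ℝ, (x, y) ∈ U →
      pdx (fun u v => ∑ m ∈ Finset.Icc 1 (N - 1), b m u v) x y
        = ∑ m ∈ Finset.Icc 1 (N - 1), pdx (b m) x y := by
    intro x y hxy
    exact (HasDerivAt.fun_sum (fun m hm => hasDerivAt_pdx_cd hU (hb m hm) hxy)).deriv
  constructor
  · intro H x y hxy
    have hpos := hapos x y hxy
    have hane : a x y ^ (-(1:ℝ)/2) ≠ 0 := (Real.rpow_pos_of_pos hpos _).ne'
    obtain ⟨hC, hck⟩ := sum_sep (Finset.Icc 1 (N - 1)) (hdist x y hxy)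
      (fun q hq => (key_lemma N hN U hU a b ha hapos hb lam hlam x y q hxy).mp
        (H x y q hxy hq))
    refine ⟨?_, ?_⟩
    · rw [hSBxEq x y hxy]
      exact (aux1 hpos _ _ _ _).mp hC
    · intro k hk
      have h0 := hck k hk
      have h1 : pdy (b k) x y - a x y ^ (-(1:ℝ)/2) * b k x y * pdx (b k) x y
          + (1 + b k x y ^ 2) * pdx (fun u v => a u v ^ (-(1:ℝ)/2)) x y = 0 :=
        (mul_eq_zero.mp h0).resolve_left hane
      linarith
  · intro H x y q hxy hq
    apply (key_lemma N hN U hU a b ha hapos hb lam hlam x y q hxy).mpr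
    obtain ⟨h1, h2⟩ := H x y hxy
    rw [hSBxEq x y hxy] at h1
    have hC := (aux1 (hapos x y hxy) (pdy a x y) (pdx a x y)
      (∑ m ∈ Finset.Icc 1 (N - 1), pdx (b m) x y)
      (∑ m ∈ Finset.Icc 1 (N - 1), b m x y)).mpr h1
    rw [hC, zero_mul]
    symm
    apply Finset.sum_eq_zero
    intro k hk
    have h3 := h2 k hk
    have h4 : pdy (b k) x y - a x y ^ (-(1:ℝ)/2) * b k x y * pdx (b k) x y
        + (1 + b k x y ^ 2) * pdx (fun u v => a u v ^ (-(1:ℝ)/2)) x y = 0 := by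
      linarith
    rw [h4, mul_zero, zero_mul]
end

section
/- Let N ≥ 2, let U ⊆ ℝ² be open with coordinates (x,y), let a be a smooth positive function on U and b₁,…,b_{N−1} smooth real functions on U satisfying the hydrodynamic-type system a_y = 2a^{1/2}·(∑_{m=1}^{N−1} b_m)_x + a^{−1/2}·a_x·(∑_{m=1}^{N−1} b_m) and, for each k, (b_k)_y = a^{−1/2}·b_k·(b_k)_x − (1+b_k²)·(a^{−1/2})_x. Set B⁰ = ∑_{m=1}^{N−1} b_m and B¹ = (1/2)·∑_{m=1}^{N−1} b_m². Then the conservation law ∂_y(B⁰·a^{3/2}) = ∂_x( a·( (3/2)(B⁰)² + B¹ + (N−1)/2 ) ) holds on U. -/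
/-- Second conservation law of the hydrodynamic-type system:
`∂_y (B⁰ a^{3/2}) = ∂_x ( a ((3/2)(B⁰)² + B¹ + (N−1)/2) )` where
`B⁰ = ∑_{m=1}^{N−1} b_m` and `B¹ = (1/2)∑_{m=1}^{N−1} b_m²`. -/
theorem second_conservation_law
    (N : ℕ) (hN : 2 ≤ N)
    (U : Set (ℝ × ℝ)) (hU : IsOpen U)
    (a : ℝ → ℝ → ℝ) (b : ℕ → ℝ → ℝ → ℝ)
    (ha : ContDiffOn ℝ (⊤ : ℕ∞) (fun z : ℝ × ℝ => a z.1 z.2) U)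
    (hapos : ∀ x y : ℝ, (x, y) ∈ U → 0 < a x y)
    (hb : ∀ m ∈ Finset.Icc 1 (N - 1), ContDiffOn ℝ (⊤ : ℕ∞) (fun z : ℝ × ℝ => b m z.1 z.2) U)
    (hsys_a : ∀ x y : ℝ, (x, y) ∈ U →
      pdy a x y =
        2 * a x y ^ ((1 : ℝ) / 2)
          * pdx (fun u v => ∑ m ∈ Finset.Icc 1 (N - 1), b m u v) x y
        + a x y ^ (-(1 : ℝ) / 2) * pdx a x y * ∑ m ∈ Finset.Icc 1 (N - 1), b m x y)
    (hsys_b : ∀ x y : ℝ, (x, y) ∈ U → ∀ k ∈ Finset.Icc 1 (N - 1),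
      pdy (b k) x y =
        a x y ^ (-(1 : ℝ) / 2) * b k x y * pdx (b k) x y
        - (1 + b k x y ^ 2) * pdx (fun u v => a u v ^ (-(1 : ℝ) / 2)) x y) :
    ∀ x y : ℝ, (x, y) ∈ U →
      pdy (fun u v =>
          (∑ m ∈ Finset.Icc 1 (N - 1), b m u v) * a u v ^ ((3 : ℝ) / 2)) x y =
      pdx (fun u v =>
          a u v * ((3 / 2) * (∑ m ∈ Finset.Icc 1 (N - 1), b m u v) ^ 2
            + (1 / 2) * (∑ m ∈ Finset.Icc 1 (N - 1), (b m u v) ^ 2)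
            + ((N : ℝ) - 1) / 2)) x y := by
  
  intro x y hxy
  have hA : 0 < a x y := hapos x y hxy
  have hnhds : U ∈ nhds (x, y) := hU.mem_nhds hxy
  have hslice : ∀ f : ℝ → ℝ → ℝ, ContDiffOn ℝ (⊤ : ℕ∞) (fun z : ℝ × ℝ => f z.1 z.2) U →
      HasDerivAt (fun t => f t y) (pdx f x y) x ∧ HasDerivAt (fun t => f x t) (pdy f x y) y := by
    intro f hf
    have hfd : DifferentiableAt ℝ (fun z : ℝ × ℝ => f z.1 z.2) (x, y) :=
      (hf.contDiffAt hnhds).differentiableAt (by simp)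
    refine ⟨DifferentiableAt.hasDerivAt ?_, DifferentiableAt.hasDerivAt ?_⟩
    · exact hfd.comp x ((differentiableAt_id (𝕜 := ℝ) (x := x)).prodMk (differentiableAt_const y))
    · exact hfd.comp y ((differentiableAt_const x).prodMk differentiableAt_id)
  obtain ⟨hax, hay⟩ := hslice a ha
  have hbx : ∀ m ∈ Finset.Icc 1 (N - 1), HasDerivAt (fun t => b m t y) (pdx (b m) x y) x :=
    fun m hm => (hslice (b m) (hb m hm)).1
  have hby : ∀ m ∈ Finset.Icc 1 (N - 1), HasDerivAt (fun t => b m x t) (pdy (b m) x y) y :=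
    fun m hm => (hslice (b m) (hb m hm)).2
  -- derivatives of the sums
  have hSx : HasDerivAt (fun t => ∑ m ∈ Finset.Icc 1 (N - 1), b m t y)
      (∑ m ∈ Finset.Icc 1 (N - 1), pdx (b m) x y) x := HasDerivAt.fun_sum hbx
  have hSy : HasDerivAt (fun t => ∑ m ∈ Finset.Icc 1 (N - 1), b m x t)
      (∑ m ∈ Finset.Icc 1 (N - 1), pdy (b m) x y) y := HasDerivAt.fun_sum hby
  have hPx : HasDerivAt (fun t => ∑ m ∈ Finset.Icc 1 (N - 1), (b m t y) ^ 2)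
      (∑ m ∈ Finset.Icc 1 (N - 1), (2 : ℕ) * b m x y ^ (2 - 1) * pdx (b m) x y) x :=
    HasDerivAt.fun_sum (fun m hm => (hbx m hm).pow 2)
  -- power derivatives
  have hA32y : HasDerivAt (fun t => a x t ^ ((3 : ℝ) / 2))
      (pdy a x y * ((3 : ℝ) / 2) * a x y ^ ((3 : ℝ) / 2 - 1)) y :=
    hay.rpow_const (Or.inl hA.ne')
  -- value of pdx of the sum
  have hSxval : pdx (fun u v => ∑ m ∈ Finset.Icc 1 (N - 1), b m u v) x y
      = ∑ m ∈ Finset.Icc 1 (N - 1), pdx (b m) x y := hSx.deriv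
  -- value of D := pdx (a^{-1/2})
  have hDval : pdx (fun u v => a u v ^ (-(1 : ℝ) / 2)) x y
      = pdx a x y * (-(1 : ℝ) / 2) * a x y ^ (-(1 : ℝ) / 2 - 1) :=
    (hax.rpow_const (Or.inl hA.ne')).deriv
  -- LHS
  have hLHS : pdy (fun u v =>
        (∑ m ∈ Finset.Icc 1 (N - 1), b m u v) * a u v ^ ((3 : ℝ) / 2)) x y
      = (∑ m ∈ Finset.Icc 1 (N - 1), pdy (b m) x y) * a x y ^ ((3 : ℝ) / 2)
        + (∑ m ∈ Finset.Icc 1 (N - 1), b m x y)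
          * (pdy a x y * ((3 : ℝ) / 2) * a x y ^ ((3 : ℝ) / 2 - 1)) :=
    (hSy.mul hA32y).deriv
  -- RHS
  have hInner : HasDerivAt (fun t =>
        (3 / 2) * (∑ m ∈ Finset.Icc 1 (N - 1), b m t y) ^ 2
        + (1 / 2) * (∑ m ∈ Finset.Icc 1 (N - 1), (b m t y) ^ 2)
        + ((N : ℝ) - 1) / 2)
      ((3 / 2) * ((2 : ℕ) * (∑ m ∈ Finset.Icc 1 (N - 1), b m x y) ^ (2 - 1)
          * ∑ m ∈ Finset.Icc 1 (N - 1), pdx (b m) x y)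
        + (1 / 2) * ∑ m ∈ Finset.Icc 1 (N - 1), (2 : ℕ) * b m x y ^ (2 - 1) * pdx (b m) x y) x :=
    (((hSx.pow 2).const_mul (3 / 2)).add (hPx.const_mul (1 / 2))).add_const (((N : ℝ) - 1) / 2)
  have hRHS : pdx (fun u v =>
        a u v * ((3 / 2) * (∑ m ∈ Finset.Icc 1 (N - 1), b m u v) ^ 2
          + (1 / 2) * (∑ m ∈ Finset.Icc 1 (N - 1), (b m u v) ^ 2)
          + ((N : ℝ) - 1) / 2)) x y
      = pdx a x y * ((3 / 2) * (∑ m ∈ Finset.Icc 1 (N - 1), b m x y) ^ 2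
          + (1 / 2) * (∑ m ∈ Finset.Icc 1 (N - 1), (b m x y) ^ 2)
          + ((N : ℝ) - 1) / 2)
        + a x y * ((3 / 2) * ((2 : ℕ) * (∑ m ∈ Finset.Icc 1 (N - 1), b m x y) ^ (2 - 1)
            * ∑ m ∈ Finset.Icc 1 (N - 1), pdx (b m) x y)
          + (1 / 2) * ∑ m ∈ Finset.Icc 1 (N - 1), (2 : ℕ) * b m x y ^ (2 - 1) * pdx (b m) x y) :=
    (hax.mul hInner).deriv
  rw [hLHS, hRHS]
  -- abbreviations
  set A := a x y with hAdef
  set Ax := pdx a x y with hAxdef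
  set S := ∑ m ∈ Finset.Icc 1 (N - 1), b m x y with hSdef
  set Sx := ∑ m ∈ Finset.Icc 1 (N - 1), pdx (b m) x y with hSxdef
  set P := ∑ m ∈ Finset.Icc 1 (N - 1), (b m x y) ^ 2 with hPdef
  set Q := ∑ m ∈ Finset.Icc 1 (N - 1), b m x y * pdx (b m) x y with hQdef
  -- sum of pdy (b m)
  have hcard : ((Finset.Icc 1 (N - 1)).card : ℝ) = (N : ℝ) - 1 := by
    have h1 : 1 ≤ N := le_trans (by norm_num) hN
    rw [Nat.card_Icc, Nat.add_sub_cancel, Nat.cast_sub h1, Nat.cast_one]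
  have hsumby : ∑ m ∈ Finset.Icc 1 (N - 1), pdy (b m) x y
      = A ^ (-(1 : ℝ) / 2) * Q
        - (Ax * (-(1 : ℝ) / 2) * A ^ (-(1 : ℝ) / 2 - 1)) * (((N : ℝ) - 1) + P) := by
    rw [Finset.sum_congr rfl (fun m hm => hsys_b x y hxy m hm)]
    rw [Finset.sum_sub_distrib, hDval]
    have t1 : ∑ m ∈ Finset.Icc 1 (N - 1), A ^ (-(1 : ℝ) / 2) * b m x y * pdx (b m) x y
        = A ^ (-(1 : ℝ) / 2) * Q := by
      rw [hQdef, Finset.mul_sum]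
      exact Finset.sum_congr rfl fun m _ => mul_assoc _ _ _
    have t2 : ∑ m ∈ Finset.Icc 1 (N - 1),
          (1 + b m x y ^ 2) * (Ax * (-(1 : ℝ) / 2) * A ^ (-(1 : ℝ) / 2 - 1))
        = (Ax * (-(1 : ℝ) / 2) * A ^ (-(1 : ℝ) / 2 - 1)) * (((N : ℝ) - 1) + P) := by
      rw [← Finset.sum_mul, Finset.sum_add_distrib, Finset.sum_const, nsmul_eq_mul,
        mul_one, hcard, ← hPdef, mul_comm]
    rw [t1, t2]
  rw [hsumby, hsys_a x y hxy, hSxval]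
  -- reduce rpow expressions
  set s := A ^ ((1 : ℝ) / 2) with hsdef
  have hs0 : (0 : ℝ) < s := Real.rpow_pos_of_pos hA _
  have hss : s * s = A := by
    rw [hsdef, ← Real.rpow_add hA]; norm_num
  have e1 : A ^ ((3 : ℝ) / 2 - 1) = s := by rw [hsdef]; norm_num
  have e2 : A ^ ((3 : ℝ) / 2) = A * s := by
    rw [show ((3 : ℝ) / 2) = 1 + 1 / 2 by norm_num, Real.rpow_add hA, Real.rpow_one, hsdef]
  have e3 : A ^ (-(1 : ℝ) / 2) = s⁻¹ := by
    rw [show (-(1 : ℝ) / 2) = -(1 / 2) by norm_num, Real.rpow_neg hA.le, hsdef]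
  have e4 : A ^ (-(1 : ℝ) / 2 - 1) = (A * s)⁻¹ := by
    rw [show (-(1 : ℝ) / 2 - 1) = -(1 + 1 / 2) by norm_num, Real.rpow_neg hA.le,
      Real.rpow_add hA, Real.rpow_one, hsdef]
  -- sum with coefficient 2
  have hsum2 : ∑ m ∈ Finset.Icc 1 (N - 1), (2 : ℕ) * b m x y ^ (2 - 1) * pdx (b m) x y
      = 2 * Q := by
    rw [hQdef, Finset.mul_sum]
    refine Finset.sum_congr rfl fun m hm => ?_
    push_cast
    ring
  rw [e1, e2, e3, e4, hsum2]
  rw [← hss]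
  have hA' : s * s ≠ 0 := by positivity
  field_simp
  ring
end

section
/- Let N ≥ 2, let U ⊆ ℝ² be open with coordinates (x,y), let a be a smooth positive function on U and b₁,…,b_{N−1} smooth real functions on U satisfying, for each k = 1,…,N−1, the equations (b_k)_y = a^{−1/2}·b_k·(b_k)_x − (1+b_k²)·(a^{−1/2})_x. Define the moments B^k = (1/(k+1))·∑_{m=1}^{N−1} b_m^{k+1} for k ≥ 0. Then on U: ∂_y B⁰ = a^{−1/2}·∂_x B¹ − ((N−1) + 2B¹)·(a^{−1/2})_x, and for every k ≥ 1: ∂_y B^k = a^{−1/2}·∂_x B^{k+1} − (k·B^{k−1} + (k+2)·B^{k+1})·(a^{−1/2})_x. -/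
/-- The moments `B^k = (1/(k+1))∑_{m=1}^{N−1} b_m^{k+1}` of the hydrodynamic-type system
satisfy the hydrodynamic chain
`∂_y B⁰ = a^{−1/2}∂_x B¹ − ((N−1) + 2B¹)(a^{−1/2})_x` and, for `k ≥ 1`,
`∂_y B^k = a^{−1/2}∂_x B^{k+1} − (kB^{k−1} + (k+2)B^{k+1})(a^{−1/2})_x`. -/
theorem moments_hydrodynamic_chain
    (N : ℕ) (hN : 2 ≤ N)
    (U : Set (ℝ × ℝ)) (hU : IsOpen U)
    (a : ℝ → ℝ → ℝ) (b : ℕ → ℝ → ℝ → ℝ)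
    (ha : ContDiffOn ℝ (⊤ : ℕ∞) (fun z : ℝ × ℝ => a z.1 z.2) U)
    (hapos : ∀ x y : ℝ, (x, y) ∈ U → 0 < a x y)
    (hb : ∀ m ∈ Finset.Icc 1 (N - 1), ContDiffOn ℝ (⊤ : ℕ∞) (fun z : ℝ × ℝ => b m z.1 z.2) U)
    (hsys_b : ∀ x y : ℝ, (x, y) ∈ U → ∀ k ∈ Finset.Icc 1 (N - 1),
      pdy (b k) x y =
        a x y ^ (-(1 : ℝ) / 2) * b k x y * pdx (b k) x y
        - (1 + b k x y ^ 2) * pdx (fun u v => a u v ^ (-(1 : ℝ) / 2)) x y)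
    (B : ℕ → ℝ → ℝ → ℝ)
    (hB : ∀ (k : ℕ) (x y : ℝ), B k x y =
      (1 / ((k : ℝ) + 1)) * ∑ m ∈ Finset.Icc 1 (N - 1), b m x y ^ (k + 1)) :
    ∀ x y : ℝ, (x, y) ∈ U →
      (pdy (B 0) x y =
        a x y ^ (-(1 : ℝ) / 2) * pdx (B 1) x y
        - (((N : ℝ) - 1) + 2 * B 1 x y)
          * pdx (fun u v => a u v ^ (-(1 : ℝ) / 2)) x y) ∧
      (∀ k : ℕ, 1 ≤ k →
        pdy (B k) x y =
          a x y ^ (-(1 : ℝ) / 2) * pdx (B (k + 1)) x y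
          - ((k : ℝ) * B (k - 1) x y + ((k : ℝ) + 2) * B (k + 1) x y)
            * pdx (fun u v => a u v ^ (-(1 : ℝ) / 2)) x y) := by
  intro x y hxy
  set A : ℝ := a x y ^ (-(1 : ℝ) / 2) with hA
  set cx : ℝ := pdx (fun u v => a u v ^ (-(1 : ℝ) / 2)) x y with hcx
  -- slice differentiability of the b m
  have hbd : ∀ m ∈ Finset.Icc 1 (N - 1),
      HasDerivAt (fun t => b m x t) (pdy (b m) x y) y ∧
      HasDerivAt (fun t => b m t y) (pdx (b m) x y) x := by
    intro m hm
    have hdm : DifferentiableAt ℝ (fun z : ℝ × ℝ => b m z.1 z.2) (x, y) :=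
      ((hb m hm).contDiffAt (hU.mem_nhds hxy)).differentiableAt (by simp)
    constructor
    · have h1 : DifferentiableAt ℝ (fun t : ℝ => b m x t) y :=
        by have := hdm.comp y ((differentiableAt_const x).prodMk differentiableAt_id); exact this
      exact h1.hasDerivAt
    · have h1 : DifferentiableAt ℝ (fun t : ℝ => b m t y) x :=
        by have := hdm.comp x ((differentiableAt_id : DifferentiableAt ℝ id x).prodMk (differentiableAt_const y)); exact this
      exact h1.hasDerivAt
  -- key derivative formulas for the moments
  have keyY : ∀ k : ℕ, pdy (B k) x y
      = ∑ m ∈ Finset.Icc 1 (N - 1), b m x y ^ k * pdy (b m) x y := by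
    intro k
    have hfun : (fun t => B k x t)
        = fun t => (1 / ((k : ℝ) + 1)) * ∑ m ∈ Finset.Icc 1 (N - 1), b m x t ^ (k + 1) := by
      funext t; exact hB k x t
    have hsum : HasDerivAt (fun t => ∑ m ∈ Finset.Icc 1 (N - 1), b m x t ^ (k + 1))
        (∑ m ∈ Finset.Icc 1 (N - 1), ((k : ℝ) + 1) * b m x y ^ k * pdy (b m) x y) y := by
      apply HasDerivAt.fun_sum
      intro m hm
      have h := ((hbd m hm).1).fun_pow (k + 1)
      simpa using h
    have hd : HasDerivAt (fun t => B k x t)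
        ((1 / ((k : ℝ) + 1)) *
          ∑ m ∈ Finset.Icc 1 (N - 1), ((k : ℝ) + 1) * b m x y ^ k * pdy (b m) x y) y := by
      rw [hfun]; exact hsum.const_mul _
    have hk : ((k : ℝ) + 1) ≠ 0 := by positivity
    show deriv (fun t => B k x t) y = _
    rw [hd.deriv, Finset.mul_sum]
    refine Finset.sum_congr rfl fun m hm => ?_
    field_simp
  have keyX : ∀ k : ℕ, pdx (B k) x y
      = ∑ m ∈ Finset.Icc 1 (N - 1), b m x y ^ k * pdx (b m) x y := by
    intro k
    have hfun : (fun t => B k t y)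
        = fun t => (1 / ((k : ℝ) + 1)) * ∑ m ∈ Finset.Icc 1 (N - 1), b m t y ^ (k + 1) := by
      funext t; exact hB k t y
    have hsum : HasDerivAt (fun t => ∑ m ∈ Finset.Icc 1 (N - 1), b m t y ^ (k + 1))
        (∑ m ∈ Finset.Icc 1 (N - 1), ((k : ℝ) + 1) * b m x y ^ k * pdx (b m) x y) x := by
      apply HasDerivAt.fun_sum
      intro m hm
      have h := ((hbd m hm).2).fun_pow (k + 1)
      simpa using h
    have hd : HasDerivAt (fun t => B k t y)
        ((1 / ((k : ℝ) + 1)) *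
          ∑ m ∈ Finset.Icc 1 (N - 1), ((k : ℝ) + 1) * b m x y ^ k * pdx (b m) x y) x := by
      rw [hfun]; exact hsum.const_mul _
    have hk : ((k : ℝ) + 1) ≠ 0 := by positivity
    show deriv (fun t => B k t y) x = _
    rw [hd.deriv, Finset.mul_sum]
    refine Finset.sum_congr rfl fun m hm => ?_
    field_simp
  -- sum relations
  have hBsum : ∀ k : ℕ, ∑ m ∈ Finset.Icc 1 (N - 1), b m x y ^ (k + 1)
      = ((k : ℝ) + 1) * B k x y := by
    intro k
    have hk : ((k : ℝ) + 1) ≠ 0 := by positivity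
    rw [hB k x y]
    field_simp
  -- main chain identity
  have main : ∀ k : ℕ, pdy (B k) x y = A * pdx (B (k + 1)) x y
      - ((∑ m ∈ Finset.Icc 1 (N - 1), b m x y ^ k)
        + (∑ m ∈ Finset.Icc 1 (N - 1), b m x y ^ (k + 2))) * cx := by
    intro k
    rw [keyY k, keyX (k + 1)]
    calc ∑ m ∈ Finset.Icc 1 (N - 1), b m x y ^ k * pdy (b m) x y
        = ∑ m ∈ Finset.Icc 1 (N - 1),
            (A * (b m x y ^ (k + 1) * pdx (b m) x y)
              - (b m x y ^ k + b m x y ^ (k + 2)) * cx) := by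
          refine Finset.sum_congr rfl fun m hm => ?_
          rw [hsys_b x y hxy m hm, ← hA, ← hcx]
          ring
      _ = _ := by
          rw [Finset.sum_sub_distrib, ← Finset.mul_sum, ← Finset.sum_mul,
            Finset.sum_add_distrib]
  constructor
  · have h0 : ∑ m ∈ Finset.Icc 1 (N - 1), b m x y ^ 0 = (N : ℝ) - 1 := by
      simp only [pow_zero, Finset.sum_const, Nat.card_Icc, nsmul_eq_mul, smul_eq_mul, mul_one]
      have h1 : 1 ≤ N := le_trans (by norm_num) hN
      have : N - 1 + 1 - 1 = N - 1 := by omega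
      rw [this]
      rw [Nat.cast_sub h1, Nat.cast_one]
    have h2 : ∑ m ∈ Finset.Icc 1 (N - 1), b m x y ^ 2 = 2 * B 1 x y := by
      have := hBsum 1
      norm_num at this
      simpa using this
    rw [main 0, h0]
    norm_num [h2]
  · intro k hk
    have h1 : ∑ m ∈ Finset.Icc 1 (N - 1), b m x y ^ k = (k : ℝ) * B (k - 1) x y := by
      have := hBsum (k - 1)
      have hkk : k - 1 + 1 = k := Nat.succ_pred_eq_of_pos hk
      rw [hkk] at this
      rw [this, Nat.cast_sub hk]
      push_cast
      ring
    have h2 : ∑ m ∈ Finset.Icc 1 (N - 1), b m x y ^ (k + 2) = ((k : ℝ) + 2) * B (k + 1) x y := by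
      have := hBsum (k + 1)
      push_cast at this
      rw [show k + 1 + 1 = k + 2 from rfl] at this
      rw [this]; ring
    rw [main k, h1, h2]
end

section
/- Let U ⊆ ℝ² be open with coordinates (x,y), let a be a smooth positive function on U, let I ⊆ ℝ be open, and let λ̃ : U × I → ℝ be a smooth function satisfying the PDE λ̃_y(x,y,q) = a(x,y)^{−1/2}·q·λ̃_x(x,y,q) + (1+q²)·λ̃_q(x,y,q)·(a^{−1/2})_x(x,y) for all (x,y) ∈ U, q ∈ I. Let q̂ : U → I be a smooth function such that λ̃_q(x,y,q̂(x,y)) = 0 for all (x,y) ∈ U (a branch point of the Riemann surface). Then the function r(x,y) := λ̃(x,y,q̂(x,y)) satisfies the diagonal (Riemann-invariant) equation r_y = a^{−1/2}·q̂·r_x on U; that is, r is a Riemann invariant with characteristic velocity μ = a^{−1/2}·q̂. -/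
/-- If `λ̃` satisfies the Liouville-type equation
`λ̃_y = a^{−1/2}qλ̃_x + (1+q²)λ̃_q(a^{−1/2})_x` and `q̂` is a branch point,
i.e. `λ̃_q(x,y,q̂(x,y)) = 0`, then `r(x,y) = λ̃(x,y,q̂(x,y))` is a Riemann invariant:
`r_y = a^{−1/2} q̂ r_x`. -/
theorem branch_point_gives_riemann_invariant
    (U : Set (ℝ × ℝ)) (hU : IsOpen U)
    (a : ℝ → ℝ → ℝ)
    (ha : ContDiffOn ℝ (⊤ : ℕ∞) (fun z : ℝ × ℝ => a z.1 z.2) U)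
    (hapos : ∀ x y : ℝ, (x, y) ∈ U → 0 < a x y)
    (I : Set ℝ) (hI : IsOpen I)
    (lam : ℝ → ℝ → ℝ → ℝ)
    (hlam : ContDiffOn ℝ (⊤ : ℕ∞) (fun z : (ℝ × ℝ) × ℝ => lam z.1.1 z.1.2 z.2) (U ×ˢ I))
    (hpde : ∀ x y q : ℝ, (x, y) ∈ U → q ∈ I →
      deriv (fun t => lam x t q) y =
        a x y ^ (-(1 : ℝ) / 2) * q * deriv (fun t => lam t y q) x
        + (1 + q ^ 2) * deriv (fun t => lam x y t) q
          * pdx (fun u v => a u v ^ (-(1 : ℝ) / 2)) x y)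
    (qhat : ℝ → ℝ → ℝ)
    (hqhat : ContDiffOn ℝ (⊤ : ℕ∞) (fun z : ℝ × ℝ => qhat z.1 z.2) U)
    (hqhatI : ∀ x y : ℝ, (x, y) ∈ U → qhat x y ∈ I)
    (hbranch : ∀ x y : ℝ, (x, y) ∈ U → deriv (fun t => lam x y t) (qhat x y) = 0)
    (r : ℝ → ℝ → ℝ)
    (hr : ∀ x y : ℝ, r x y = lam x y (qhat x y)) :
    ∀ x y : ℝ, (x, y) ∈ U →
      pdy r x y = a x y ^ (-(1 : ℝ) / 2) * qhat x y * pdx r x y := by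
  intro x y hxy
  set q0 := qhat x y with hq0
  have hq0I : q0 ∈ I := hqhatI x y hxy
  set g : (ℝ × ℝ) × ℝ → ℝ := fun z => lam z.1.1 z.1.2 z.2 with hg
  set p : (ℝ × ℝ) × ℝ := ((x, y), q0) with hp
  have hpUI : p ∈ U ×ˢ I := ⟨hxy, hq0I⟩
  have hopen : IsOpen (U ×ˢ I) := hU.prod hI
  have hgd : DifferentiableAt ℝ g p :=
    ((hlam.contDiffAt (hopen.mem_nhds hpUI)).differentiableAt (by simp))
  have hgf : HasFDerivAt g (fderiv ℝ g p) p := hgd.hasFDerivAt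
  set L := fderiv ℝ g p with hL
  -- qhat is differentiable at (x,y)
  have hqd : DifferentiableAt ℝ (fun z : ℝ × ℝ => qhat z.1 z.2) (x, y) :=
    (hqhat.contDiffAt (hU.mem_nhds hxy)).differentiableAt (by simp)
  have hqdx : DifferentiableAt ℝ (fun t => qhat t y) x := by
    have : DifferentiableAt ℝ (fun t : ℝ => (t, y)) x :=
      DifferentiableAt.prodMk (differentiableAt_id) (differentiableAt_const _)
    exact hqd.comp x this
  have hqdy : DifferentiableAt ℝ (fun t => qhat x t) y := by
    have : DifferentiableAt ℝ (fun t : ℝ => (x, t)) y :=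
      DifferentiableAt.prodMk (differentiableAt_const _) differentiableAt_id
    exact hqd.comp y this
  set dqx := deriv (fun t => qhat t y) x with hdqx
  set dqy := deriv (fun t => qhat x t) y with hdqy
  -- partial derivatives of lam as L applied to basis directions
  have hlx : HasDerivAt (fun t => lam t y q0) (L (((1:ℝ),(0:ℝ)),(0:ℝ))) x := by
    have hc : HasDerivAt (fun t : ℝ => (((t, y), q0) : (ℝ × ℝ) × ℝ)) (((1:ℝ),(0:ℝ)),(0:ℝ)) x :=
      HasDerivAt.prodMk (HasDerivAt.prodMk (hasDerivAt_id x) (hasDerivAt_const x y)) (hasDerivAt_const x q0)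
    exact hgf.comp_hasDerivAt x hc
  have hly : HasDerivAt (fun t => lam x t q0) (L (((0:ℝ),(1:ℝ)),(0:ℝ))) y := by
    have hc : HasDerivAt (fun t : ℝ => (((x, t), q0) : (ℝ × ℝ) × ℝ)) (((0:ℝ),(1:ℝ)),(0:ℝ)) y :=
      HasDerivAt.prodMk (HasDerivAt.prodMk (hasDerivAt_const y x) (hasDerivAt_id y)) (hasDerivAt_const y q0)
    exact hgf.comp_hasDerivAt y hc
  have hlq : HasDerivAt (fun t => lam x y t) (L (((0:ℝ),(0:ℝ)),(1:ℝ))) q0 := by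
    have hc : HasDerivAt (fun t : ℝ => (((x, y), t) : (ℝ × ℝ) × ℝ)) (((0:ℝ),(0:ℝ)),(1:ℝ)) q0 :=
      HasDerivAt.prodMk (HasDerivAt.prodMk (hasDerivAt_const q0 x) (hasDerivAt_const q0 y)) (hasDerivAt_id q0)
    exact hgf.comp_hasDerivAt q0 hc
  have hlq0 : L (((0:ℝ),(0:ℝ)),(1:ℝ)) = 0 := by
    rw [← hlq.deriv]
    exact hbranch x y hxy
  -- derivative of r in x
  have hrx : HasDerivAt (fun t => r t y) (L (((1:ℝ),(0:ℝ)),(0:ℝ))) x := by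
    have hc : HasDerivAt (fun t : ℝ => (((t, y), qhat t y) : (ℝ × ℝ) × ℝ))
        (((1:ℝ),(0:ℝ)), dqx) x :=
      HasDerivAt.prodMk (HasDerivAt.prodMk (hasDerivAt_id x) (hasDerivAt_const x y)) hqdx.hasDerivAt
    have h1 : HasDerivAt (fun t => lam t y (qhat t y)) (L (((1:ℝ),(0:ℝ)), dqx)) x := by
      exact hgf.comp_hasDerivAt x hc
    have hsplit : L (((1:ℝ),(0:ℝ)), dqx) = L (((1:ℝ),(0:ℝ)),(0:ℝ)) := by
      have : ((((1:ℝ),(0:ℝ)), dqx) : (ℝ × ℝ) × ℝ)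
          = (((1:ℝ),(0:ℝ)),(0:ℝ)) + dqx • ((((0:ℝ),(0:ℝ)),(1:ℝ)) : (ℝ × ℝ) × ℝ) := by
        simp [Prod.ext_iff]
      rw [this, map_add, map_smul, hlq0]
      simp
    rw [hsplit] at h1
    have : (fun t => r t y) = fun t => lam t y (qhat t y) := by
      funext t; exact hr t y
    rw [this]
    exact h1
  have hry : HasDerivAt (fun t => r x t) (L (((0:ℝ),(1:ℝ)),(0:ℝ))) y := by
    have hc : HasDerivAt (fun t : ℝ => (((x, t), qhat x t) : (ℝ × ℝ) × ℝ))
        (((0:ℝ),(1:ℝ)), dqy) y :=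
      HasDerivAt.prodMk (HasDerivAt.prodMk (hasDerivAt_const y x) (hasDerivAt_id y)) hqdy.hasDerivAt
    have h1 : HasDerivAt (fun t => lam x t (qhat x t)) (L (((0:ℝ),(1:ℝ)), dqy)) y := by
      exact hgf.comp_hasDerivAt y hc
    have hsplit : L (((0:ℝ),(1:ℝ)), dqy) = L (((0:ℝ),(1:ℝ)),(0:ℝ)) := by
      have : ((((0:ℝ),(1:ℝ)), dqy) : (ℝ × ℝ) × ℝ)
          = (((0:ℝ),(1:ℝ)),(0:ℝ)) + dqy • ((((0:ℝ),(0:ℝ)),(1:ℝ)) : (ℝ × ℝ) × ℝ) := by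
        simp [Prod.ext_iff]
      rw [this, map_add, map_smul, hlq0]
      simp
    rw [hsplit] at h1
    have : (fun t => r x t) = fun t => lam x t (qhat x t) := by
      funext t; exact hr x t
    rw [this]
    exact h1
  have hpde' := hpde x y q0 hxy hq0I
  rw [hbranch x y hxy] at hpde'
  simp only [mul_zero, zero_mul, add_zero] at hpde'
  -- conclude
  unfold pdy pdx
  rw [hry.deriv, hrx.deriv, ← hly.deriv, ← hlx.deriv] at *
  exact hpde'
end

section
/- Let U ⊆ ℝ² be open with coordinates (x,y), and let a be a smooth positive function and b a smooth real function on U satisfying the two-component hydrodynamic-type system a_y = 2a^{1/2}·b_x + a^{−1/2}·b·a_x and b_y = a^{−1/2}·b·b_x − (1+b²)·(a^{−1/2})_x. Define r¹ = (1/2)·a^{−1/2}/(b + √(b²+1)) and r² = (1/2)·a^{−1/2}/(b − √(b²+1)). Then r¹ and r² are Riemann invariants putting the system in diagonal form: r¹_y = −2·r²·r¹_x and r²_y = −2·r¹·r²_x on U. -/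
lemma hasDerivAt_rplus (A B : ℝ → ℝ) (t dA dB : ℝ)
    (hA : HasDerivAt A dA t) (hB : HasDerivAt B dB t) (h0 : 0 < A t)
    (hden : B t + Real.sqrt (B t ^ 2 + 1) ≠ 0) :
    HasDerivAt (fun u => 1 / 2 * A u ^ (-(1:ℝ)/2) / (B u + Real.sqrt (B u ^ 2 + 1)))
      ((1/2 * (dA * (-(1:ℝ)/2) * A t ^ (-(1:ℝ)/2 - 1)) * (B t + Real.sqrt (B t ^2+1))
        - 1/2 * A t ^ (-(1:ℝ)/2) * (dB + (2 * B t * dB) / (2 * Real.sqrt (B t ^2+1))))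
        / (B t + Real.sqrt (B t ^2+1)) ^ 2) t := by
  have hnum : HasDerivAt (fun u => 1/2 * A u ^ (-(1:ℝ)/2))
      (1/2 * (dA * (-(1:ℝ)/2) * A t ^ (-(1:ℝ)/2 - 1))) t :=
    (hA.rpow_const (Or.inl h0.ne')).const_mul (1/2)
  have hinner : HasDerivAt (fun u => B u ^ 2 + 1) (2 * B t * dB) t := by
    simpa using (hB.pow 2).add_const 1
  have hsq : HasDerivAt (fun u => Real.sqrt (B u ^2+1))
      ((2 * B t * dB) / (2 * Real.sqrt (B t ^2+1))) t := hinner.sqrt (by positivity)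
  exact hnum.div (hB.add hsq) hden

lemma hasDerivAt_rminus (A B : ℝ → ℝ) (t dA dB : ℝ)
    (hA : HasDerivAt A dA t) (hB : HasDerivAt B dB t) (h0 : 0 < A t)
    (hden : B t - Real.sqrt (B t ^ 2 + 1) ≠ 0) :
    HasDerivAt (fun u => 1 / 2 * A u ^ (-(1:ℝ)/2) / (B u - Real.sqrt (B u ^ 2 + 1)))
      ((1/2 * (dA * (-(1:ℝ)/2) * A t ^ (-(1:ℝ)/2 - 1)) * (B t - Real.sqrt (B t ^2+1))
        - 1/2 * A t ^ (-(1:ℝ)/2) * (dB - (2 * B t * dB) / (2 * Real.sqrt (B t ^2+1))))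
        / (B t - Real.sqrt (B t ^2+1)) ^ 2) t := by
  have hnum : HasDerivAt (fun u => 1/2 * A u ^ (-(1:ℝ)/2))
      (1/2 * (dA * (-(1:ℝ)/2) * A t ^ (-(1:ℝ)/2 - 1))) t :=
    (hA.rpow_const (Or.inl h0.ne')).const_mul (1/2)
  have hinner : HasDerivAt (fun u => B u ^ 2 + 1) (2 * B t * dB) t := by
    simpa using (hB.pow 2).add_const 1
  have hsq : HasDerivAt (fun u => Real.sqrt (B u ^2+1))
      ((2 * B t * dB) / (2 * Real.sqrt (B t ^2+1))) t := hinner.sqrt (by positivity)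
  exact hnum.div (hB.sub hsq) hden

/-- In the two-component case `N = 2`, the functions
`r¹ = (1/2)a^{−1/2}/(b+√(b²+1))` and `r² = (1/2)a^{−1/2}/(b−√(b²+1))` are Riemann
invariants of the hydrodynamic-type system, putting it in the diagonal form
`r¹_y = −2r²r¹_x`, `r²_y = −2r¹r²_x`. -/
theorem riemann_invariants_two_component
    (U : Set (ℝ × ℝ)) (hU : IsOpen U)
    (a b : ℝ → ℝ → ℝ)
    (ha : ContDiffOn ℝ (⊤ : ℕ∞) (fun z : ℝ × ℝ => a z.1 z.2) U)
    (hapos : ∀ x y : ℝ, (x, y) ∈ U → 0 < a x y)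
    (hb : ContDiffOn ℝ (⊤ : ℕ∞) (fun z : ℝ × ℝ => b z.1 z.2) U)
    (hsys_a : ∀ x y : ℝ, (x, y) ∈ U →
      pdy a x y = 2 * a x y ^ ((1 : ℝ) / 2) * pdx b x y
        + a x y ^ (-(1 : ℝ) / 2) * b x y * pdx a x y)
    (hsys_b : ∀ x y : ℝ, (x, y) ∈ U →
      pdy b x y = a x y ^ (-(1 : ℝ) / 2) * b x y * pdx b x y
        - (1 + b x y ^ 2) * pdx (fun u v => a u v ^ (-(1 : ℝ) / 2)) x y)
    (r1 r2 : ℝ → ℝ → ℝ)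
    (hr1 : ∀ x y : ℝ, r1 x y =
      (1 / 2) * a x y ^ (-(1 : ℝ) / 2) / (b x y + Real.sqrt (b x y ^ 2 + 1)))
    (hr2 : ∀ x y : ℝ, r2 x y =
      (1 / 2) * a x y ^ (-(1 : ℝ) / 2) / (b x y - Real.sqrt (b x y ^ 2 + 1))) :
    ∀ x y : ℝ, (x, y) ∈ U →
      pdy r1 x y = -2 * r2 x y * pdx r1 x y ∧
      pdy r2 x y = -2 * r1 x y * pdx r2 x y := by
  intro x y hm
  -- differentiability of the coordinate sections
  have haD : DifferentiableAt ℝ (fun z : ℝ × ℝ => a z.1 z.2) (x, y) :=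
    (ha.contDiffAt (hU.mem_nhds hm)).differentiableAt (by simp)
  have hbD : DifferentiableAt ℝ (fun z : ℝ × ℝ => b z.1 z.2) (x, y) :=
    (hb.contDiffAt (hU.mem_nhds hm)).differentiableAt (by simp)
  have hcx : DifferentiableAt ℝ (fun t : ℝ => (t, y)) x :=
    DifferentiableAt.prodMk differentiableAt_id (differentiableAt_const y)
  have hcy : DifferentiableAt ℝ (fun t : ℝ => (x, t)) y :=
    DifferentiableAt.prodMk (differentiableAt_const x) differentiableAt_id
  have hAx : HasDerivAt (fun t => a t y) (pdx a x y) x := by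
    have h2 : DifferentiableAt ℝ ((fun z : ℝ × ℝ => a z.1 z.2) ∘ (fun t : ℝ => (t, y))) x :=
      DifferentiableAt.comp x haD hcx
    exact DifferentiableAt.hasDerivAt h2
  have hAy : HasDerivAt (fun t => a x t) (pdy a x y) y := by
    have h2 : DifferentiableAt ℝ ((fun z : ℝ × ℝ => a z.1 z.2) ∘ (fun t : ℝ => (x, t))) y :=
      DifferentiableAt.comp y haD hcy
    exact DifferentiableAt.hasDerivAt h2
  have hBx : HasDerivAt (fun t => b t y) (pdx b x y) x := by
    have h2 : DifferentiableAt ℝ ((fun z : ℝ × ℝ => b z.1 z.2) ∘ (fun t : ℝ => (t, y))) x :=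
      DifferentiableAt.comp x hbD hcx
    exact DifferentiableAt.hasDerivAt h2
  have hBy : HasDerivAt (fun t => b x t) (pdy b x y) y := by
    have h2 : DifferentiableAt ℝ ((fun z : ℝ × ℝ => b z.1 z.2) ∘ (fun t : ℝ => (x, t))) y :=
      DifferentiableAt.comp y hbD hcy
    exact DifferentiableAt.hasDerivAt h2
  have hA0 : 0 < a x y := hapos x y hm
  set A := a x y with hAdef
  set B := b x y with hBdef
  set s : ℝ := Real.sqrt (B ^ 2 + 1) with hsdef
  set P : ℝ := A ^ (-(1:ℝ)/2) with hPdef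
  set ax := pdx a x y
  set bx := pdx b x y
  set ay := pdy a x y
  set by' := pdy b x y
  have hs2 : s ^ 2 = B ^ 2 + 1 := Real.sq_sqrt (by positivity)
  have hs0 : 0 < s := Real.sqrt_pos.mpr (by positivity)
  have hd1 : (0:ℝ) < B + s := by nlinarith
  have hd2 : B - s < 0 := by nlinarith
  have hP0 : 0 < P := Real.rpow_pos_of_pos hA0 _
  have hP2 : P * P = A⁻¹ := by
    have := (Real.rpow_add hA0 (-(1:ℝ)/2) (-(1:ℝ)/2)).symm
    rw [hPdef, this]
    norm_num [Real.rpow_neg_one]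
  have hPA : A ^ (-(1:ℝ)/2 - 1) = P * A⁻¹ := by
    rw [show (-(1:ℝ)/2 - 1) = (-(1:ℝ)/2) + (-1) by ring, Real.rpow_add hA0,
      Real.rpow_neg_one, hPdef]
  have hhalf : A ^ ((1:ℝ)/2) = P⁻¹ := by
    rw [hPdef, show (-(1:ℝ)/2) = -((1:ℝ)/2) by ring, Real.rpow_neg hA0.le, inv_inv]
  -- the four partial derivatives of r1, r2
  have hf1x : (fun t => r1 t y) = fun t => 1 / 2 * a t y ^ (-(1:ℝ)/2)
      / (b t y + Real.sqrt (b t y ^ 2 + 1)) := funext fun t => hr1 t y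
  have hf1y : (fun t => r1 x t) = fun t => 1 / 2 * a x t ^ (-(1:ℝ)/2)
      / (b x t + Real.sqrt (b x t ^ 2 + 1)) := funext fun t => hr1 x t
  have hf2x : (fun t => r2 t y) = fun t => 1 / 2 * a t y ^ (-(1:ℝ)/2)
      / (b t y - Real.sqrt (b t y ^ 2 + 1)) := funext fun t => hr2 t y
  have hf2y : (fun t => r2 x t) = fun t => 1 / 2 * a x t ^ (-(1:ℝ)/2)
      / (b x t - Real.sqrt (b x t ^ 2 + 1)) := funext fun t => hr2 x t
  have e1x : pdx r1 x y = (1/2 * (ax * (-(1:ℝ)/2) * (P * A⁻¹)) * (B + s)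
      - 1/2 * P * (bx + (2 * B * bx) / (2 * s))) / (B + s) ^ 2 := by
    rw [← hPA]
    show deriv (fun t => r1 t y) x = _
    rw [hf1x]
    exact (hasDerivAt_rplus (fun t => a t y) (fun t => b t y) x ax bx hAx hBx hA0 hd1.ne').deriv
  have e1y : pdy r1 x y = (1/2 * (ay * (-(1:ℝ)/2) * (P * A⁻¹)) * (B + s)
      - 1/2 * P * (by' + (2 * B * by') / (2 * s))) / (B + s) ^ 2 := by
    rw [← hPA]
    show deriv (fun t => r1 x t) y = _
    rw [hf1y]
    exact (hasDerivAt_rplus (fun t => a x t) (fun t => b x t) y ay by' hAy hBy hA0 hd1.ne').deriv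
  have e2x : pdx r2 x y = (1/2 * (ax * (-(1:ℝ)/2) * (P * A⁻¹)) * (B - s)
      - 1/2 * P * (bx - (2 * B * bx) / (2 * s))) / (B - s) ^ 2 := by
    rw [← hPA]
    show deriv (fun t => r2 t y) x = _
    rw [hf2x]
    exact (hasDerivAt_rminus (fun t => a t y) (fun t => b t y) x ax bx hAx hBx hA0 hd2.ne).deriv
  have e2y : pdy r2 x y = (1/2 * (ay * (-(1:ℝ)/2) * (P * A⁻¹)) * (B - s)
      - 1/2 * P * (by' - (2 * B * by') / (2 * s))) / (B - s) ^ 2 := by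
    rw [← hPA]
    show deriv (fun t => r2 x t) y = _
    rw [hf2y]
    exact (hasDerivAt_rminus (fun t => a x t) (fun t => b x t) y ay by' hAy hBy hA0 hd2.ne).deriv
  -- the system, rewritten in terms of P
  have hay : ay = 2 * P⁻¹ * bx + P * B * ax := by
    have := hsys_a x y hm
    rw [hhalf] at this
    exact this
  have hpdxpow : pdx (fun u v => a u v ^ (-(1:ℝ)/2)) x y = ax * (-(1:ℝ)/2) * (P * A⁻¹) := by
    rw [← hPA]
    show deriv (fun t => a t y ^ (-(1:ℝ)/2)) x = _
    exact (hAx.rpow_const (Or.inl hA0.ne')).deriv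
  have hby : by' = P * B * bx - (1 + B ^ 2) * (ax * (-(1:ℝ)/2) * (P * A⁻¹)) := by
    have := hsys_b x y hm
    rw [hpdxpow] at this
    exact this
  -- eliminate A using A⁻¹ = P * P
  rw [← hP2] at e1x e1y e2x e2y hby
  have hr1v : r1 x y = 1 / 2 * P / (B + s) := hr1 x y
  have hr2v : r2 x y = 1 / 2 * P / (B - s) := hr2 x y
  constructor
  · rw [e1y, e1x, hr2v, hay, hby]
    field_simp [hd1.ne', hd2.ne, hs0.ne', hP0.ne']
    linear_combination ((2 * bx + P ^ 2 * B * ax) * s + (2 * bx * B + P ^ 2 * ax * (1 + B ^ 2)) - P ^ 2 * ax) * hs2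
  · rw [e2y, e2x, hr1v, hay, hby]
    field_simp [hd1.ne', hd2.ne, hs0.ne', hP0.ne']
    linear_combination ((2 * bx + P ^ 2 * B * ax) * s - (2 * bx * B + P ^ 2 * ax * (1 + B ^ 2)) + P ^ 2 * ax) * hs2
end

section
/- Let U ⊆ ℝ² be open with coordinates (x¹,x²), let g be a smooth function on U, let I ⊆ ℝ be open, and define H(x¹,x²,p) = √((g(x¹,x²)² − 1)p² + 1) − g(x¹,x²)·p on the set where (g² − 1)p² + 1 > 0. Let λ be a smooth function on this set satisfying the Liouville-type equation λ_{x²} = H_p·λ_{x¹} − λ_p·H_{x¹} (where H_{x¹} is the partial derivative of H in x¹ at fixed p). Suppose p̂ : U → I is a smooth function with (g(x)² − 1)p̂(x)² + 1 > 0 on U, such that λ(x¹,x²,p̂(x¹,x²)) is constant on U and λ_p(x¹,x²,p̂(x¹,x²)) ≠ 0 on U. Then p̂ satisfies the conservation law ∂_{x²} p̂ = ∂_{x¹} [ √((g² − 1)p̂² + 1) − g·p̂ ] on U, where the right-hand side is the total x¹-derivative of the composite function (x¹,x²) ↦ H(x¹,x²,p̂(x¹,x²)). In other words, p̂ is a generating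 density of conservation laws and the Liouville-type equation is the generating equation of conservation laws of the associated hydrodynamic-type system. -/
/-- If `λ` satisfies the Liouville-type equation `λ_{x²} = H_p λ_{x¹} − λ_p H_{x¹}` for
`H = √((g²−1)p²+1) − gp`, and `p̂` is a smooth function along which `λ` is constant and
`λ_p ≠ 0`, then `p̂` is a density of a conservation law:
`∂_{x²} p̂ = ∂_{x¹} [√((g²−1)p̂²+1) − g p̂]`. -/
theorem generating_function_of_conservation_laws
    (U : Set (ℝ × ℝ)) (hU : IsOpen U)
    (g : ℝ → ℝ → ℝ)
    (hg : ContDiffOn ℝ (⊤ : ℕ∞) (fun z : ℝ × ℝ => g z.1 z.2) U)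
    (I : Set ℝ) (hI : IsOpen I)
    (H : ℝ → ℝ → ℝ → ℝ)
    (hH : ∀ x1 x2 p : ℝ, 0 < (g x1 x2 ^ 2 - 1) * p ^ 2 + 1 →
      H x1 x2 p = Real.sqrt ((g x1 x2 ^ 2 - 1) * p ^ 2 + 1) - g x1 x2 * p)
    (lam : ℝ → ℝ → ℝ → ℝ)
    (hlam : ContDiffOn ℝ (⊤ : ℕ∞) (fun z : (ℝ × ℝ) × ℝ => lam z.1.1 z.1.2 z.2)
      {z : (ℝ × ℝ) × ℝ | z.1 ∈ U ∧ z.2 ∈ I ∧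
        0 < (g z.1.1 z.1.2 ^ 2 - 1) * z.2 ^ 2 + 1})
    (hpde : ∀ x1 x2 p : ℝ, (x1, x2) ∈ U → p ∈ I →
      0 < (g x1 x2 ^ 2 - 1) * p ^ 2 + 1 →
      deriv (fun t => lam x1 t p) x2 =
        deriv (fun t => H x1 x2 t) p * deriv (fun t => lam t x2 p) x1
        - deriv (fun t => lam x1 x2 t) p * deriv (fun t => H t x2 p) x1)
    (phat : ℝ → ℝ → ℝ)
    (hphat : ContDiffOn ℝ (⊤ : ℕ∞) (fun z : ℝ × ℝ => phat z.1 z.2) U)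
    (hphatI : ∀ x1 x2 : ℝ, (x1, x2) ∈ U → phat x1 x2 ∈ I)
    (hphatpos : ∀ x1 x2 : ℝ, (x1, x2) ∈ U →
      0 < (g x1 x2 ^ 2 - 1) * phat x1 x2 ^ 2 + 1)
    (hconst : ∃ c : ℝ, ∀ x1 x2 : ℝ, (x1, x2) ∈ U → lam x1 x2 (phat x1 x2) = c)
    (hlamp_ne : ∀ x1 x2 : ℝ, (x1, x2) ∈ U →
      deriv (fun t => lam x1 x2 t) (phat x1 x2) ≠ 0) :
    ∀ x1 x2 : ℝ, (x1, x2) ∈ U →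
      pd2 phat x1 x2 =
        pd1 (fun u v =>
          Real.sqrt ((g u v ^ 2 - 1) * phat u v ^ 2 + 1) - g u v * phat u v) x1 x2 := by
  intro x1 x2 hx
  obtain ⟨c, hc⟩ := hconst
  set p0 := phat x1 x2 with hp0def
  have hpos := hphatpos x1 x2 hx
  have hpI := hphatI x1 x2 hx
  -- basic vectors
  set e1 : (ℝ × ℝ) × ℝ := ((1, 0), 0) with he1
  set e2 : (ℝ × ℝ) × ℝ := ((0, 1), 0) with he2
  set e3 : (ℝ × ℝ) × ℝ := ((0, 0), 1) with he3
  -- the explicit Hamiltonian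
  set Phi : (ℝ × ℝ) × ℝ → ℝ := fun z =>
    Real.sqrt ((g z.1.1 z.1.2 ^ 2 - 1) * z.2 ^ 2 + 1) - g z.1.1 z.1.2 * z.2 with hPhidef
  set q : (ℝ × ℝ) × ℝ := ((x1, x2), p0) with hqdef
  -- openness of the positivity region
  have hSopen : IsOpen {z : (ℝ × ℝ) × ℝ | z.1 ∈ U ∧
      0 < (g z.1.1 z.1.2 ^ 2 - 1) * z.2 ^ 2 + 1} := by
    rw [isOpen_iff_mem_nhds]
    rintro z ⟨hz1, hz2⟩
    have hcg : ContinuousAt (fun w : (ℝ × ℝ) × ℝ => g w.1.1 w.1.2) z := by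
      have h1 : ContinuousAt (fun w : ℝ × ℝ => g w.1 w.2) z.1 :=
        (hg.continuousOn.continuousAt (hU.mem_nhds hz1))
      exact h1.comp continuousAt_fst
    have hcf : ContinuousAt
        (fun w : (ℝ × ℝ) × ℝ => (g w.1.1 w.1.2 ^ 2 - 1) * w.2 ^ 2 + 1) z := by
      exact (((hcg.pow 2).sub continuousAt_const).mul
        ((continuousAt_snd).pow 2)).add continuousAt_const
    have hUmem : {w : (ℝ × ℝ) × ℝ | w.1 ∈ U} ∈ nhds z :=
      continuousAt_fst.preimage_mem_nhds (hU.mem_nhds hz1)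
    have hpmem : {w : (ℝ × ℝ) × ℝ |
        0 < (g w.1.1 w.1.2 ^ 2 - 1) * w.2 ^ 2 + 1} ∈ nhds z :=
      hcf (Ioi_mem_nhds hz2)
    filter_upwards [hUmem, hpmem] with w h1 h2
    exact ⟨h1, h2⟩
  have hTopen : IsOpen {z : (ℝ × ℝ) × ℝ | z.1 ∈ U ∧ z.2 ∈ I ∧
      0 < (g z.1.1 z.1.2 ^ 2 - 1) * z.2 ^ 2 + 1} := by
    have : {z : (ℝ × ℝ) × ℝ | z.1 ∈ U ∧ z.2 ∈ I ∧
        0 < (g z.1.1 z.1.2 ^ 2 - 1) * z.2 ^ 2 + 1} =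
        ({z : (ℝ × ℝ) × ℝ | z.1 ∈ U ∧
          0 < (g z.1.1 z.1.2 ^ 2 - 1) * z.2 ^ 2 + 1} ∩ (Prod.snd ⁻¹' I)) := by
      ext z; constructor
      · rintro ⟨a, b, d⟩; exact ⟨⟨a, d⟩, b⟩
      · rintro ⟨⟨a, d⟩, b⟩; exact ⟨a, b, d⟩
    rw [this]
    exact hSopen.inter (hI.preimage continuous_snd)
  have hqS : q ∈ {z : (ℝ × ℝ) × ℝ | z.1 ∈ U ∧
      0 < (g z.1.1 z.1.2 ^ 2 - 1) * z.2 ^ 2 + 1} := ⟨hx, hpos⟩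
  have hqT : q ∈ {z : (ℝ × ℝ) × ℝ | z.1 ∈ U ∧ z.2 ∈ I ∧
      0 < (g z.1.1 z.1.2 ^ 2 - 1) * z.2 ^ 2 + 1} := ⟨hx, hpI, hpos⟩
  -- differentiability of Phi anywhere on the positivity region
  have hPhiDiff : ∀ z : (ℝ × ℝ) × ℝ, z.1 ∈ U →
      0 < (g z.1.1 z.1.2 ^ 2 - 1) * z.2 ^ 2 + 1 → DifferentiableAt ℝ Phi z := by
    intro z hz1 hz2
    have hgd : DifferentiableAt ℝ (fun w : (ℝ × ℝ) × ℝ => g w.1.1 w.1.2) z := by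
      have h1 : DifferentiableAt ℝ (fun w : ℝ × ℝ => g w.1 w.2) z.1 :=
        (hg.contDiffAt (hU.mem_nhds hz1)).differentiableAt (by simp)
      exact h1.comp z differentiableAt_fst
    have hin : DifferentiableAt ℝ
        (fun w : (ℝ × ℝ) × ℝ => (g w.1.1 w.1.2 ^ 2 - 1) * w.2 ^ 2 + 1) z :=
      (((hgd.pow 2).sub (differentiableAt_const 1)).mul
        (differentiableAt_snd.pow 2)).add (differentiableAt_const 1)
    exact (hin.sqrt (ne_of_gt hz2)).sub (hgd.mul differentiableAt_snd)
  -- fderiv of Phi and lam at q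
  have hMfd : HasFDerivAt Phi (fderiv ℝ Phi q) q := (hPhiDiff q hx hpos).hasFDerivAt
  set M := fderiv ℝ Phi q with hMdef
  have hLdiff : DifferentiableAt ℝ (fun z : (ℝ × ℝ) × ℝ => lam z.1.1 z.1.2 z.2) q :=
    (hlam.contDiffAt (hTopen.mem_nhds hqT)).differentiableAt (by simp)
  have hLfd : HasFDerivAt (fun z : (ℝ × ℝ) × ℝ => lam z.1.1 z.1.2 z.2)
      (fderiv ℝ (fun z : (ℝ × ℝ) × ℝ => lam z.1.1 z.1.2 z.2) q) q := hLdiff.hasFDerivAt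
  set L := fderiv ℝ (fun z : (ℝ × ℝ) × ℝ => lam z.1.1 z.1.2 z.2) q with hLdef
  -- partial derivative curves
  have hcurve1 : HasDerivAt (fun t : ℝ => ((t, x2), p0)) e1 x1 :=
    ((hasDerivAt_id x1).prodMk (hasDerivAt_const x1 x2)).prodMk (hasDerivAt_const x1 p0)
  have hcurve2 : HasDerivAt (fun t : ℝ => ((x1, t), p0)) e2 x2 :=
    ((hasDerivAt_const x2 x1).prodMk (hasDerivAt_id x2)).prodMk (hasDerivAt_const x2 p0)
  have hcurve3 : HasDerivAt (fun t : ℝ => ((x1, x2), t)) e3 p0 :=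
    ((hasDerivAt_const p0 x1).prodMk (hasDerivAt_const p0 x2)).prodMk (hasDerivAt_id p0)
  -- derivatives of phat
  have hPdiff : DifferentiableAt ℝ (fun z : ℝ × ℝ => phat z.1 z.2) (x1, x2) :=
    (hphat.contDiffAt (hU.mem_nhds hx)).differentiableAt (by simp)
  have hd1 : HasDerivAt (fun t => phat t x2) (pd1 phat x1 x2) x1 := by
    have hdd : DifferentiableAt ℝ (fun t => phat t x2) x1 :=
      (hPdiff.comp x1 (differentiableAt_id.prodMk (differentiableAt_const x2) :
        DifferentiableAt ℝ (fun t : ℝ => (t, x2)) x1) :)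
    simpa [pd1] using hdd.hasDerivAt
  have hd2 : HasDerivAt (fun t => phat x1 t) (pd2 phat x1 x2) x2 := by
    have hdd : DifferentiableAt ℝ (fun t => phat x1 t) x2 :=
      hPdiff.comp x2 ((differentiableAt_const x1).prodMk differentiableAt_id)
    simpa [pd2] using hdd.hasDerivAt
  set d1 := pd1 phat x1 x2 with hd1def
  set d2 := pd2 phat x1 x2 with hd2def
  -- composite curves along phat
  have hcurveP1 : HasDerivAt (fun t : ℝ => ((t, x2), phat t x2)) (((1, 0), d1) : (ℝ × ℝ) × ℝ) x1 :=
    ((hasDerivAt_id x1).prodMk (hasDerivAt_const x1 x2)).prodMk hd1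
  have hcurveP2 : HasDerivAt (fun t : ℝ => ((x1, t), phat x1 t)) (((0, 1), d2) : (ℝ × ℝ) × ℝ) x2 :=
    ((hasDerivAt_const x2 x1).prodMk (hasDerivAt_id x2)).prodMk hd2
  -- linear decompositions
  have hsplit1 : (((1, 0), d1) : (ℝ × ℝ) × ℝ) = e1 + d1 • e3 := by
    simp [he1, he3, Prod.ext_iff]
  have hsplit2 : (((0, 1), d2) : (ℝ × ℝ) × ℝ) = e2 + d2 • e3 := by
    simp [he2, he3, Prod.ext_iff]
  -- partial derivatives of lam in terms of L
  have hlam1 : deriv (fun t => lam t x2 p0) x1 = L e1 :=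
    (hLfd.comp_hasDerivAt x1 hcurve1 :).deriv
  have hlam2 : deriv (fun t => lam x1 t p0) x2 = L e2 :=
    (hLfd.comp_hasDerivAt x2 hcurve2 :).deriv
  have hlam3 : deriv (fun t => lam x1 x2 t) p0 = L e3 :=
    (hLfd.comp_hasDerivAt p0 hcurve3).deriv
  -- partial derivatives of H in terms of M, via local equality H = Phi
  have hHev1 : (fun t => H t x2 p0) =ᶠ[nhds x1] (fun t => Phi ((t, x2), p0)) := by
    have hmem : (fun t : ℝ => ((t, x2), p0)) ⁻¹' {z : (ℝ × ℝ) × ℝ | z.1 ∈ U ∧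
        0 < (g z.1.1 z.1.2 ^ 2 - 1) * z.2 ^ 2 + 1} ∈ nhds x1 :=
      hcurve1.continuousAt.preimage_mem_nhds (hSopen.mem_nhds hqS)
    filter_upwards [hmem] with t ht
    exact hH t x2 p0 ht.2
  have hHev3 : (fun t => H x1 x2 t) =ᶠ[nhds p0] (fun t => Phi ((x1, x2), t)) := by
    have hmem : (fun t : ℝ => ((x1, x2), t)) ⁻¹' {z : (ℝ × ℝ) × ℝ | z.1 ∈ U ∧
        0 < (g z.1.1 z.1.2 ^ 2 - 1) * z.2 ^ 2 + 1} ∈ nhds p0 :=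
      hcurve3.continuousAt.preimage_mem_nhds (hSopen.mem_nhds hqS)
    filter_upwards [hmem] with t ht
    exact hH x1 x2 t ht.2
  have hH1 : deriv (fun t => H t x2 p0) x1 = M e1 := by
    rw [hHev1.deriv_eq]
    exact (hMfd.comp_hasDerivAt x1 hcurve1).deriv
  have hH3 : deriv (fun t => H x1 x2 t) p0 = M e3 := by
    rw [hHev3.deriv_eq]
    exact (hMfd.comp_hasDerivAt p0 hcurve3).deriv
  -- constancy along phat: two linear relations
  have heq1 : L e1 + d1 * L e3 = 0 := by
    have hcomp : HasDerivAt (fun t => lam t x2 (phat t x2)) (L (((1, 0), d1))) x1 :=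
      (hLfd.comp_hasDerivAt x1 hcurveP1 :)
    have hev : (fun t => lam t x2 (phat t x2)) =ᶠ[nhds x1] (fun _ => c) := by
      have hmem : (fun t : ℝ => (t, x2)) ⁻¹' U ∈ nhds x1 :=
        ((continuous_id.prodMk continuous_const).continuousAt).preimage_mem_nhds
          (hU.mem_nhds hx)
      filter_upwards [hmem] with t ht
      exact hc t x2 ht
    have h0 : deriv (fun t => lam t x2 (phat t x2)) x1 = 0 := by
      rw [hev.deriv_eq]; simp
    have := hcomp.deriv
    rw [h0] at this
    rw [hsplit1, map_add, map_smul, smul_eq_mul] at this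
    linarith [this]
  have heq2 : L e2 + d2 * L e3 = 0 := by
    have hcomp : HasDerivAt (fun t => lam x1 t (phat x1 t)) (L (((0, 1), d2))) x2 :=
      (hLfd.comp_hasDerivAt x2 hcurveP2 :)
    have hev : (fun t => lam x1 t (phat x1 t)) =ᶠ[nhds x2] (fun _ => c) := by
      have hmem : (fun t : ℝ => (x1, t)) ⁻¹' U ∈ nhds x2 :=
        ((continuous_const.prodMk continuous_id).continuousAt).preimage_mem_nhds
          (hU.mem_nhds hx)
      filter_upwards [hmem] with t ht
      exact hc x1 t ht
    have h0 : deriv (fun t => lam x1 t (phat x1 t)) x2 = 0 := by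
      rw [hev.deriv_eq]; simp
    have := hcomp.deriv
    rw [h0] at this
    rw [hsplit2, map_add, map_smul, smul_eq_mul] at this
    linarith [this]
  -- the PDE at the point
  have heq3 : L e2 = M e3 * L e1 - L e3 * M e1 := by
    have := hpde x1 x2 p0 hx hpI hpos
    rw [hlam1, hlam2, hlam3, hH1, hH3] at this
    linarith [this]
  -- nonvanishing of lam_p
  have hLe3 : L e3 ≠ 0 := by
    have := hlamp_ne x1 x2 hx
    rwa [← hp0def, hlam3] at this
  -- RHS: total x1-derivative of the composite Hamiltonian
  have hRHS : pd1 (fun u v =>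
      Real.sqrt ((g u v ^ 2 - 1) * phat u v ^ 2 + 1) - g u v * phat u v) x1 x2
      = M e1 + d1 * M e3 := by
    have hcomp : HasDerivAt (fun t => Phi ((t, x2), phat t x2)) (M (((1, 0), d1))) x1 :=
      (hMfd.comp_hasDerivAt x1 hcurveP1 :)
    have : deriv (fun t => Phi ((t, x2), phat t x2)) x1 = M e1 + d1 * M e3 := by
      rw [hcomp.deriv, hsplit1, map_add, map_smul, smul_eq_mul]
    exact this
  rw [hRHS]
  -- final algebra
  have key : L e3 * d2 = L e3 * (M e1 + d1 * M e3) := by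
    linear_combination heq2 - heq3 - (M e3) * heq1
  exact mul_left_cancel₀ hLe3 key
end
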